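/- arXiv:2502.01426 — 6 statements merged into one kernel-verified Lean document; each statement's English description precedes it below -/
import Mathlib

section
/- Let (r(t), p(t)), with r(t) = (r₁(t),…,rₙ(t)) ∈ (ℝ²)ⁿ and p_i = m_i ṙ_i, be a solution of the planar n-body equations ṙ = M⁻¹p, ṗ = −∇V(r) on an interval, with r_i(t) ≠ r_j(t) for i ≠ j. Suppose that at every time t the gradient vectors ∇H(r(t),p(t)) and ∇C(r(t),p(t)) in ℝ^{4n} are linearly dependent, where H(r,p) = (1/2)pᵀM⁻¹p + V(r) and C(r,p) = ∑_i r_iᵀ J₂ᵀ p_i. Then for each i the function t ↦ |r_i(t)| is constant, and t ↦ |r_s(t)| is constant, where r_s = (1/m)∑_i m_i r_i and m = ∑_i m_i. -/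
open Matrix Finset

/-- Euclidean norm of a planar vector. -/
noncomputable def norm2 (v : Fin 2 → ℝ) : ℝ := Real.sqrt (v 0 ^ 2 + v 1 ^ 2)

/-- The `i`-th block of the gradient of the Newtonian potential
`V(r) = −∑_{i<j} m_i m_j/|r_i−r_j|`, namely `∑_{j≠i} m_i m_j (r_i − r_j)/|r_i − r_j|³`. -/
noncomputable def gradV {n : ℕ} (m : Fin n → ℝ) (r : Fin n → Fin 2 → ℝ) :
    Fin n → Fin 2 → ℝ :=
  fun i => ∑ j ∈ Finset.univ.erase i,
    (m i * m j / norm2 (r i - r j) ^ 3) • (r i - r j)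

/-- The rotation `J₂ = [[0,−1],[1,0]]` applied to a planar vector. -/
def j2 (v : Fin 2 → ℝ) : Fin 2 → ℝ := ![-(v 1), v 0]

/-- The transpose `J₂ᵀ` applied to a planar vector. -/
def j2t (v : Fin 2 → ℝ) : Fin 2 → ℝ := ![v 1, -(v 0)]

private lemma const_of_deriv0 {a b : ℝ} {f : ℝ → ℝ}
    (hf : ∀ t ∈ Set.Ioo a b, HasDerivAt f 0 t) :
    ∀ t ∈ Set.Ioo a b, ∀ t' ∈ Set.Ioo a b, f t = f t' := by
  intro t ht t' ht'
  refine (convex_Ioo a b).is_const_of_fderivWithin_eq_zero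
    (fun x hx => (hf x hx).differentiableAt.differentiableWithinAt) ?_ ht ht'
  intro x hx
  rw [fderivWithin_eq_fderiv ((isOpen_Ioo).uniqueDiffOn x hx) (hf x hx).differentiableAt,
    (hf x hx).hasFDerivAt.fderiv]
  exact ContinuousLinearMap.ext fun y => by
    simp [ContinuousLinearMap.smulRight_apply]

/-- Along a solution of the planar `n`-body problem on an interval, if the
gradients of the Hamiltonian `H` and of the angular momentum `C` are everywhere linearly
dependent, then each `|r_i(t)|` is constant, and `|r_s(t)|` is constant, where
`r_s = (1/m)∑ m_i r_i`. -/
theorem nbody_dependent_gradients_norms_constant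
    {n : ℕ} (hn : 2 ≤ n) (m : Fin n → ℝ) (hm : ∀ i, 0 < m i)
    (a b : ℝ) (r p : ℝ → Fin n → Fin 2 → ℝ)
    (hsep : ∀ t ∈ Set.Ioo a b, ∀ i j, i ≠ j → r t i ≠ r t j)
    (hr : ∀ t ∈ Set.Ioo a b, ∀ i, HasDerivAt (fun τ => r τ i) ((m i)⁻¹ • p t i) t)
    (hp : ∀ t ∈ Set.Ioo a b, ∀ i, HasDerivAt (fun τ => p τ i) (-(gradV m (r t) i)) t)
    (hdep : ∀ t ∈ Set.Ioo a b, ∃ α β : ℝ, (α, β) ≠ (0, 0) ∧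
      (∀ i, α • gradV m (r t) i + β • j2t (p t i) = 0) ∧
      (∀ i, α • ((m i)⁻¹ • p t i) + β • j2 (r t i) = 0)) :
    (∀ i, ∀ t ∈ Set.Ioo a b, ∀ t' ∈ Set.Ioo a b, norm2 (r t i) = norm2 (r t' i)) ∧
    (∀ t ∈ Set.Ioo a b, ∀ t' ∈ Set.Ioo a b,
      norm2 ((∑ i, m i)⁻¹ • ∑ i, m i • r t i)
        = norm2 ((∑ i, m i)⁻¹ • ∑ i, m i • r t' i)) := by
  -- Step 1: at each time, velocities are a common multiple of `j2` of positions.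
  have key : ∀ t ∈ Set.Ioo a b, ∃ c : ℝ, ∀ i, (m i)⁻¹ • p t i = c • j2 (r t i) := by
    intro t ht
    obtain ⟨α, β, hne, -, h2⟩ := hdep t ht
    by_cases hα : α = 0
    · exfalso
      have hβ : β ≠ 0 := by
        intro hβ; exact hne (by simp [hα, hβ])
      have hz : ∀ i, r t i = 0 := by
        intro i
        have := h2 i
        rw [hα, zero_smul, zero_add] at this
        have hj : j2 (r t i) = 0 := by
          have := congrArg (fun v => β⁻¹ • v) this
          simpa [smul_smul, inv_mul_cancel₀ hβ] using this
        funext k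
        fin_cases k
        · have := congrFun hj 1
          simpa [j2] using this
        · have := congrFun hj 0
          simpa [j2, neg_eq_zero] using this
      have h01 : (⟨0, by omega⟩ : Fin n) ≠ ⟨1, by omega⟩ := by
        simp [Fin.ext_iff]
      exact hsep t ht _ _ h01 ((hz _).trans (hz _).symm)
    · refine ⟨-(β / α), fun i => ?_⟩
      have := h2 i
      have : α • ((m i)⁻¹ • p t i) = -(β • j2 (r t i)) := by
        rw [← neg_eq_of_add_eq_zero_left this]
      have := congrArg (fun v => α⁻¹ • v) this
      simpa [smul_smul, inv_mul_cancel_left₀ hα, inv_mul_cancel₀ hα, mul_assoc, div_eq_inv_mul, neg_smul] using this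
  -- Component derivatives
  have hcomp : ∀ t ∈ Set.Ioo a b, ∀ i k,
      HasDerivAt (fun τ => r τ i k) (((m i)⁻¹ • p t i) k) t := by
    intro t ht i k
    exact hasDerivAt_pi.1 (hr t ht i) k
  -- Part 1: each |r_i| is constant.
  have part1 : ∀ i, ∀ t ∈ Set.Ioo a b, ∀ t' ∈ Set.Ioo a b,
      norm2 (r t i) = norm2 (r t' i) := by
    intro i
    have hconst : ∀ t ∈ Set.Ioo a b, ∀ t' ∈ Set.Ioo a b,
        (fun τ => (r τ i 0) ^ 2 + (r τ i 1) ^ 2) t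
          = (fun τ => (r τ i 0) ^ 2 + (r τ i 1) ^ 2) t' := by
      apply const_of_deriv0
      intro t ht
      obtain ⟨c, hc⟩ := key t ht
      have hx := hcomp t ht i 0
      have hy := hcomp t ht i 1
      rw [hc i] at hx hy
      have hx0 : ((c • j2 (r t i)) 0) = c * (-(r t i 1)) := by simp [j2]
      have hy0 : ((c • j2 (r t i)) 1) = c * (r t i 0) := by simp [j2]
      rw [hx0] at hx; rw [hy0] at hy
      have hD := (hx.pow 2).add (hy.pow 2)
      have : (↑(2:ℕ) * r t i 0 ^ (2 - 1) * (c * -r t i 1)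
          + ↑(2:ℕ) * r t i 1 ^ (2 - 1) * (c * r t i 0)) = 0 := by
        push_cast; ring
      rwa [this] at hD
    intro t ht t' ht'
    have := hconst t ht t' ht'
    exact congrArg Real.sqrt this
  refine ⟨part1, ?_⟩
  -- Part 2: |r_s| is constant.
  have hconst : ∀ t ∈ Set.Ioo a b, ∀ t' ∈ Set.Ioo a b,
      (fun τ => ((∑ i, m i)⁻¹ * ∑ i, m i * r τ i 0) ^ 2
        + ((∑ i, m i)⁻¹ * ∑ i, m i * r τ i 1) ^ 2) t
      = (fun τ => ((∑ i, m i)⁻¹ * ∑ i, m i * r τ i 0) ^ 2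
        + ((∑ i, m i)⁻¹ * ∑ i, m i * r τ i 1) ^ 2) t' := by
    apply const_of_deriv0
    intro t ht
    obtain ⟨c, hc⟩ := key t ht
    set Minv := (∑ i, m i)⁻¹ with hM
    have hS0 : HasDerivAt (fun τ => Minv * ∑ i, m i * r τ i 0)
        (Minv * ∑ i, m i * (c * (-(r t i 1)))) t := by
      refine HasDerivAt.const_mul _ (HasDerivAt.fun_sum fun i _ => ?_)
      have := (hcomp t ht i 0).const_mul (m i)
      rw [hc i] at this
      simpa [j2] using this
    have hS1 : HasDerivAt (fun τ => Minv * ∑ i, m i * r τ i 1)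
        (Minv * ∑ i, m i * (c * (r t i 0))) t := by
      refine HasDerivAt.const_mul _ (HasDerivAt.fun_sum fun i _ => ?_)
      have := (hcomp t ht i 1).const_mul (m i)
      rw [hc i] at this
      simpa [j2] using this
    have hD := (hS0.pow 2).add (hS1.pow 2)
    have e0 : (∑ i, m i * (c * (-(r t i 1)))) = -c * ∑ i, m i * r t i 1 := by
      rw [Finset.mul_sum]; congr 1; funext i; ring
    have e1 : (∑ i, m i * (c * (r t i 0))) = c * ∑ i, m i * r t i 0 := by
      rw [Finset.mul_sum]; congr 1; funext i; ring
    rw [e0, e1] at hD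
    have : (↑(2:ℕ) * (Minv * ∑ i, m i * r t i 0) ^ (2 - 1)
          * (Minv * (-c * ∑ i, m i * r t i 1))
        + ↑(2:ℕ) * (Minv * ∑ i, m i * r t i 1) ^ (2 - 1)
          * (Minv * (c * ∑ i, m i * r t i 0))) = 0 := by
      push_cast; ring
    rwa [this] at hD
  intro t ht t' ht'
  have := hconst t ht t' ht'
  simp only [norm2, Pi.smul_apply, Finset.sum_apply, smul_eq_mul]
  exact congrArg Real.sqrt this
end

section
/- Let s = (s₁,…,sₙ) ∈ (ℝ²)ⁿ be a central configuration with parameter μ, i.e. ∇V(s) = μ M s with the s_i pairwise distinct. Let ρ(t) > 0 and ν(t) be real functions solving the planar Kepler equations ρ̈ − ρ ν̇² = −μ/ρ² and ρ ν̈ + 2 ρ̇ ν̇ = 0 on an interval. Then r(t) = ρ(t) Â(ν(t)) s, where Â(ν) applies the rotation A(ν) = [[cos ν, −sin ν],[sin ν, cos ν]] to each planar component s_i, is a solution of Newton's equations M r̈ = −∇V(r). -/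
open Matrix Finset

/-- The rotation matrix `A(ν)`. -/
noncomputable def rotM (θ : ℝ) : Matrix (Fin 2) (Fin 2) ℝ :=
  !![Real.cos θ, -Real.sin θ; Real.sin θ, Real.cos θ]

lemma rot_apply0 (θ : ℝ) (v : Fin 2 → ℝ) :
    (rotM θ).mulVec v 0 = Real.cos θ * v 0 - Real.sin θ * v 1 := by
  simp [rotM, Matrix.mulVec, dotProduct, Fin.sum_univ_two]
  ring

lemma rot_apply1 (θ : ℝ) (v : Fin 2 → ℝ) :
    (rotM θ).mulVec v 1 = Real.cos θ * v 1 - Real.sin θ * (-(v 0)) := by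
  simp [rotM, Matrix.mulVec, dotProduct, Fin.sum_univ_two]
  ring

lemma rot_smul (θ : ℝ) (c : ℝ) (v : Fin 2 → ℝ) :
    (rotM θ).mulVec (c • v) = c • (rotM θ).mulVec v := by
  rw [← Matrix.mulVecLin_apply, _root_.map_smul, Matrix.mulVecLin_apply]

lemma norm2_smul {c : ℝ} (hc : 0 ≤ c) (v : Fin 2 → ℝ) :
    norm2 (c • v) = c * norm2 v := by
  unfold norm2
  have : (c • v) 0 ^ 2 + (c • v) 1 ^ 2 = c ^ 2 * (v 0 ^ 2 + v 1 ^ 2) := by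
    simp [Pi.smul_apply, smul_eq_mul]; ring
  rw [this, Real.sqrt_mul (sq_nonneg c), Real.sqrt_sq hc]

lemma norm2_rot (θ : ℝ) (v : Fin 2 → ℝ) :
    norm2 ((rotM θ).mulVec v) = norm2 v := by
  unfold norm2
  congr 1
  rw [rot_apply0, rot_apply1]
  have h := Real.cos_sq_add_sin_sq θ
  nlinarith [h]

lemma norm2_pos {v : Fin 2 → ℝ} (hv : v ≠ 0) : 0 < norm2 v := by
  have h : v 0 ≠ 0 ∨ v 1 ≠ 0 := by
    by_contra h
    push_neg at h
    apply hv
    funext k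
    fin_cases k <;> simp [h.1, h.2]
  unfold norm2
  apply Real.sqrt_pos.2
  rcases h with h | h
  · nlinarith [sq_nonneg (v 1), sq_pos_of_ne_zero h]
  · nlinarith [sq_nonneg (v 0), sq_pos_of_ne_zero h]

lemma gradV_scale {n : ℕ} (m : Fin n → ℝ) (s : Fin n → Fin 2 → ℝ)
    (hsep : ∀ i j, i ≠ j → s i ≠ s j) {ρ : ℝ} (hρ : 0 < ρ) (θ : ℝ) (i : Fin n) :
    gradV m (fun j => ρ • (rotM θ).mulVec (s j)) i
      = (ρ ^ 2)⁻¹ • (rotM θ).mulVec (gradV m s i) := by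
  unfold gradV
  rw [show (rotM θ).mulVec (∑ j ∈ Finset.univ.erase i,
        (m i * m j / norm2 (s i - s j) ^ 3) • (s i - s j))
      = ∑ j ∈ Finset.univ.erase i,
        (rotM θ).mulVec ((m i * m j / norm2 (s i - s j) ^ 3) • (s i - s j)) from by
    simp only [← Matrix.mulVecLin_apply, map_sum]]
  rw [Finset.smul_sum]
  refine Finset.sum_congr rfl fun j hj => ?_
  have hji : j ≠ i := Finset.ne_of_mem_erase hj
  have hne : s i - s j ≠ 0 := sub_ne_zero.2 (hsep i j hji.symm)
  have hnv : 0 < norm2 (s i - s j) := norm2_pos hne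
  have hdiff : (ρ • (rotM θ).mulVec (s i)) - (ρ • (rotM θ).mulVec (s j))
      = ρ • (rotM θ).mulVec (s i - s j) := by
    rw [Matrix.mulVec_sub, smul_sub]
  rw [hdiff, norm2_smul hρ.le, norm2_rot, rot_smul, smul_smul, smul_smul]
  congr 1
  field_simp

lemma hasDerivAt_comp1 {ρ ν : ℝ → ℝ} (p q τ : ℝ)
    (hρ : DifferentiableAt ℝ ρ τ) (hν : DifferentiableAt ℝ ν τ) :
    HasDerivAt (fun σ => ρ σ * (Real.cos (ν σ) * p - Real.sin (ν σ) * q))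
      (deriv ρ τ * (Real.cos (ν τ) * p - Real.sin (ν τ) * q)
        + ρ τ * (deriv ν τ * (-Real.sin (ν τ) * p - Real.cos (ν τ) * q))) τ := by
  have hν' : HasDerivAt ν (deriv ν τ) τ := hν.hasDerivAt
  have hcos : HasDerivAt (fun σ => Real.cos (ν σ)) (-Real.sin (ν τ) * deriv ν τ) τ :=
    (Real.hasDerivAt_cos (ν τ)).comp τ hν'
  have hsin : HasDerivAt (fun σ => Real.sin (ν σ)) (Real.cos (ν τ) * deriv ν τ) τ :=
    (Real.hasDerivAt_sin (ν τ)).comp τ hν'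
  have hinner := (hcos.mul_const p).sub (hsin.mul_const q)
  have := hρ.hasDerivAt.mul hinner
  convert this using 1
  · rfl
  · rfl
  · rfl
  · simp only [Pi.sub_apply, Pi.add_apply, Pi.mul_apply, Pi.neg_apply]
    ring

lemma hasDerivAt_comp2 {ρ ν : ℝ → ℝ} (p q t : ℝ)
    (hρ : DifferentiableAt ℝ ρ t) (hρ' : DifferentiableAt ℝ (deriv ρ) t)
    (hν : DifferentiableAt ℝ ν t) (hν' : DifferentiableAt ℝ (deriv ν) t) :
    HasDerivAt (fun τ => deriv ρ τ * (Real.cos (ν τ) * p - Real.sin (ν τ) * q)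
        + ρ τ * (deriv ν τ * (-Real.sin (ν τ) * p - Real.cos (ν τ) * q)))
      ((deriv (deriv ρ) t - ρ t * (deriv ν t) ^ 2)
          * (Real.cos (ν t) * p - Real.sin (ν t) * q)
        + (ρ t * deriv (deriv ν) t + 2 * deriv ρ t * deriv ν t)
          * (-Real.sin (ν t) * p - Real.cos (ν t) * q)) t := by
  have hνd : HasDerivAt ν (deriv ν t) t := hν.hasDerivAt
  have hcos : HasDerivAt (fun σ => Real.cos (ν σ)) (-Real.sin (ν t) * deriv ν t) t :=
    (Real.hasDerivAt_cos (ν t)).comp t hνd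
  have hsin : HasDerivAt (fun σ => Real.sin (ν σ)) (Real.cos (ν t) * deriv ν t) t :=
    (Real.hasDerivAt_sin (ν t)).comp t hνd
  have h1 := hρ'.hasDerivAt.mul ((hcos.mul_const p).sub (hsin.mul_const q))
  have h2 := hρ.hasDerivAt.mul
    (hν'.hasDerivAt.mul ((((hsin.neg.mul_const p)).sub (hcos.mul_const q))))
  have := h1.add h2
  convert this using 1
  · rfl
  · rfl
  · rfl
  · simp only [Pi.sub_apply, Pi.add_apply, Pi.mul_apply, Pi.neg_apply]
    ring

/-- If `s` is a central configuration with parameter `μ` and `(ρ, ν)`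
solves the planar Kepler equations on an interval with `ρ > 0`, then
`r(t) = ρ(t) Â(ν(t)) s` solves Newton's equations `M r̈ = −∇V(r)`. -/
theorem homographic_solution
    {n : ℕ} (hn : 2 ≤ n) (m : Fin n → ℝ) (hm : ∀ i, 0 < m i)
    (s : Fin n → Fin 2 → ℝ) (hsep : ∀ i j, i ≠ j → s i ≠ s j)
    (μ : ℝ) (hcc : ∀ i, gradV m s i = (μ * m i) • s i)
    (a b : ℝ) (ρ ν : ℝ → ℝ)
    (hρpos : ∀ t ∈ Set.Ioo a b, 0 < ρ t)
    (hρd : ∀ t ∈ Set.Ioo a b, DifferentiableAt ℝ ρ t ∧ DifferentiableAt ℝ (deriv ρ) t)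
    (hνd : ∀ t ∈ Set.Ioo a b, DifferentiableAt ℝ ν t ∧ DifferentiableAt ℝ (deriv ν) t)
    (hkep1 : ∀ t ∈ Set.Ioo a b,
      deriv (deriv ρ) t - ρ t * (deriv ν t) ^ 2 = -μ / ρ t ^ 2)
    (hkep2 : ∀ t ∈ Set.Ioo a b,
      ρ t * deriv (deriv ν) t + 2 * deriv ρ t * deriv ν t = 0) :
    ∀ t ∈ Set.Ioo a b, ∀ i,
      m i • deriv (deriv (fun τ => ρ τ • (rotM (ν τ)).mulVec (s i))) t
        = -(gradV m (fun j => ρ t • (rotM (ν t)).mulVec (s j)) i) := by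
  intro t ht i
  set p := s i 0 with hp
  set q := s i 1 with hq
  set F : ℝ → Fin 2 → ℝ := fun τ => ρ τ • (rotM (ν τ)).mulVec (s i) with hF
  have hF0 : ∀ τ, F τ 0 = ρ τ * (Real.cos (ν τ) * p - Real.sin (ν τ) * q) := by
    intro τ
    simp only [hF, Pi.smul_apply, smul_eq_mul, rot_apply0]
    rfl
  have hF1 : ∀ τ, F τ 1 = ρ τ * (Real.cos (ν τ) * q - Real.sin (ν τ) * (-p)) := by
    intro τ
    simp only [hF, Pi.smul_apply, smul_eq_mul, rot_apply1]
    rfl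
  set G : ℝ → Fin 2 → ℝ := fun τ =>
    ![deriv ρ τ * (Real.cos (ν τ) * p - Real.sin (ν τ) * q)
        + ρ τ * (deriv ν τ * (-Real.sin (ν τ) * p - Real.cos (ν τ) * q)),
      deriv ρ τ * (Real.cos (ν τ) * q - Real.sin (ν τ) * (-p))
        + ρ τ * (deriv ν τ * (-Real.sin (ν τ) * q - Real.cos (ν τ) * (-p)))] with hG
  have hFG : ∀ τ ∈ Set.Ioo a b, HasDerivAt F (G τ) τ := by
    intro τ hτ
    rw [hasDerivAt_pi]
    intro k
    fin_cases k
    · show HasDerivAt (fun x => F x 0) (G τ 0) τ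
      have e : (fun x => F x 0)
          = fun σ => ρ σ * (Real.cos (ν σ) * p - Real.sin (ν σ) * q) := funext hF0
      have e2 : G τ 0 = deriv ρ τ * (Real.cos (ν τ) * p - Real.sin (ν τ) * q)
        + ρ τ * (deriv ν τ * (-Real.sin (ν τ) * p - Real.cos (ν τ) * q)) := by
        simp [hG]
      rw [e, e2]
      exact hasDerivAt_comp1 p q τ (hρd τ hτ).1 (hνd τ hτ).1
    · show HasDerivAt (fun x => F x 1) (G τ 1) τ
      have e : (fun x => F x 1)
          = fun σ => ρ σ * (Real.cos (ν σ) * q - Real.sin (ν σ) * (-p)) := funext hF1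
      have e2 : G τ 1 = deriv ρ τ * (Real.cos (ν τ) * q - Real.sin (ν τ) * (-p))
        + ρ τ * (deriv ν τ * (-Real.sin (ν τ) * q - Real.cos (ν τ) * (-p))) := by
        simp [hG]
      rw [e, e2]
      exact hasDerivAt_comp1 q (-p) τ (hρd τ hτ).1 (hνd τ hτ).1
  have hderivF : deriv F =ᶠ[nhds t] G := by
    filter_upwards [isOpen_Ioo.mem_nhds ht] with τ hτ using (hFG τ hτ).deriv
  have hdd : deriv (deriv F) t = deriv G t := hderivF.deriv_eq
  set D : Fin 2 → ℝ := fun k =>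
    (deriv (deriv ρ) t - ρ t * (deriv ν t) ^ 2)
      * ((rotM (ν t)).mulVec (s i) k)
    + (ρ t * deriv (deriv ν) t + 2 * deriv ρ t * deriv ν t)
      * (![(-Real.sin (ν t) * p - Real.cos (ν t) * q),
          (-Real.sin (ν t) * q - Real.cos (ν t) * (-p))] k) with hD
  have hGD : HasDerivAt G D t := by
    rw [hasDerivAt_pi]
    obtain ⟨hρ1, hρ2⟩ := hρd t ht
    obtain ⟨hν1, hν2⟩ := hνd t ht
    intro k
    fin_cases k
    · show HasDerivAt (fun τ => G τ 0) (D 0) t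
      have e : (fun τ => G τ 0) = fun τ =>
          deriv ρ τ * (Real.cos (ν τ) * p - Real.sin (ν τ) * q)
            + ρ τ * (deriv ν τ * (-Real.sin (ν τ) * p - Real.cos (ν τ) * q)) := by
        funext τ; simp [hG]
      have e2 : D 0 = (deriv (deriv ρ) t - ρ t * (deriv ν t) ^ 2)
          * (Real.cos (ν t) * p - Real.sin (ν t) * q)
        + (ρ t * deriv (deriv ν) t + 2 * deriv ρ t * deriv ν t)
          * (-Real.sin (ν t) * p - Real.cos (ν t) * q) := by
        simp only [hD, rot_apply0, Matrix.cons_val_zero]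
        rfl
      rw [e, e2]
      exact hasDerivAt_comp2 p q t hρ1 hρ2 hν1 hν2
    · show HasDerivAt (fun τ => G τ 1) (D 1) t
      have e : (fun τ => G τ 1) = fun τ =>
          deriv ρ τ * (Real.cos (ν τ) * q - Real.sin (ν τ) * (-p))
            + ρ τ * (deriv ν τ * (-Real.sin (ν τ) * q - Real.cos (ν τ) * (-p))) := by
        funext τ; simp [hG]
      have e2 : D 1 = (deriv (deriv ρ) t - ρ t * (deriv ν t) ^ 2)
          * (Real.cos (ν t) * q - Real.sin (ν t) * (-p))
        + (ρ t * deriv (deriv ν) t + 2 * deriv ρ t * deriv ν t)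
          * (-Real.sin (ν t) * q - Real.cos (ν t) * (-p)) := by
        simp only [hD, rot_apply1, Matrix.cons_val_one, Matrix.head_cons, Matrix.cons_val_zero]
        rfl
      rw [e, e2]
      exact hasDerivAt_comp2 q (-p) t hρ1 hρ2 hν1 hν2
  have hρt := hρpos t ht
  have hR : (rotM (ν t)).mulVec ((μ * m i) • s i)
      = (μ * m i) • ((rotM (ν t)).mulVec (s i)) := rot_smul _ _ _
  rw [gradV_scale m s hsep hρt (ν t) i, hcc i, hdd, hGD.deriv, hR]
  funext k
  have hk1 := hkep1 t ht
  have hk2 := hkep2 t ht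
  have hρne : ρ t ≠ 0 := ne_of_gt hρt
  simp only [hD, Pi.smul_apply, Pi.neg_apply, smul_eq_mul, hk1, hk2]
  field_simp
  ring
end

section
/- Let s ∈ (ℝ²)ⁿ, with pairwise distinct components, be a central configuration with parameter μ ≠ 0 (∇V(s) = μ M s), and let H̃(s) = μ⁻¹ M^{-1/2} ∇²V(s) M^{-1/2}. Then M^{1/2}s is an eigenvector of H̃(s) with eigenvalue −2, and M^{1/2}Ĵs is an eigenvector of H̃(s) with eigenvalue 1, where Ĵ = diag(J₂,…,J₂) and J₂ = [[0,−1],[1,0]]. Equivalently, ∇²V(s) s = −2μ M s and ∇²V(s) Ĵs = μ M Ĵs. -/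
open Matrix Finset

/-- Off-diagonal `2×2` block (`i ≠ j`) of the Hessian `∇²V(r)`. -/
noncomputable def hblockOff {n : ℕ} (m : Fin n → ℝ) (r : Fin n → Fin 2 → ℝ)
    (i j : Fin n) : Matrix (Fin 2) (Fin 2) ℝ :=
  -(m i * m j / norm2 (r i - r j) ^ 3) •
    (1 - (3 / norm2 (r i - r j) ^ 2) • vecMulVec (r i - r j) (r i - r j))

/-- The `2×2` blocks of the Hessian `∇²V(r)`, with `H_ii(r) = −∑_{j≠i} H_ij(r)`. -/
noncomputable def hblock {n : ℕ} (m : Fin n → ℝ) (r : Fin n → Fin 2 → ℝ)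
    (i j : Fin n) : Matrix (Fin 2) (Fin 2) ℝ :=
  if i = j then -∑ k ∈ Finset.univ.erase i, hblockOff m r i k else hblockOff m r i j

lemma my_sum_mulVec {ι : Type*} [DecidableEq ι] (t : Finset ι) (f : ι → Matrix (Fin 2) (Fin 2) ℝ)
    (v : Fin 2 → ℝ) : (∑ k ∈ t, f k) *ᵥ v = ∑ k ∈ t, f k *ᵥ v := by
  induction t using Finset.induction with
  | empty => simp [Matrix.mulVec]
  | insert _ _ h ih => simp [Finset.sum_insert h, Matrix.add_mulVec, ih]

lemma norm2_sq (u : Fin 2 → ℝ) : norm2 u ^ 2 = u 0 ^ 2 + u 1 ^ 2 :=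
  Real.sq_sqrt (by positivity)

lemma sq_sum_ne (u : Fin 2 → ℝ) (hu : u ≠ 0) : u 0 ^ 2 + u 1 ^ 2 ≠ 0 := by
  intro h
  apply hu
  have h0 : u 0 = 0 := by nlinarith [sq_nonneg (u 0), sq_nonneg (u 1)]
  have h1 : u 1 = 0 := by nlinarith [sq_nonneg (u 0), sq_nonneg (u 1)]
  funext k
  fin_cases k
  · simpa using h0
  · simpa using h1

lemma key_u (c : ℝ) (u : Fin 2 → ℝ) (hu : u ≠ 0) :
    (-(c) • (1 - (3 / norm2 u ^ 2) • vecMulVec u u)) *ᵥ u = (2 * c) • u := by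
  have h0 := sq_sum_ne u hu
  funext k
  fin_cases k <;>
    · simp [Matrix.mulVec, dotProduct, Fin.sum_univ_two, vecMulVec, Matrix.one_apply,
        norm2_sq, Matrix.sub_apply, Matrix.smul_apply]
      field_simp
      ring

lemma key_j (c : ℝ) (u : Fin 2 → ℝ) (hu : u ≠ 0) :
    (-(c) • (1 - (3 / norm2 u ^ 2) • vecMulVec u u)) *ᵥ j2 u = (-c) • j2 u := by
  have h0 := sq_sum_ne u hu
  funext k
  fin_cases k <;>
    · simp [Matrix.mulVec, dotProduct, Fin.sum_univ_two, vecMulVec, Matrix.one_apply,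
        norm2_sq, Matrix.sub_apply, Matrix.smul_apply, j2]
      field_simp
      ring

lemma j2_sum {ι : Type*} (t : Finset ι) (f : ι → Fin 2 → ℝ) :
    j2 (∑ k ∈ t, f k) = ∑ k ∈ t, j2 (f k) := by
  funext k
  fin_cases k <;> simp [j2, Finset.sum_apply]

lemma j2_smul (a : ℝ) (v : Fin 2 → ℝ) : j2 (a • v) = a • j2 v := by
  funext k; fin_cases k <;> simp [j2, mul_comm]

lemma j2_sub (v w : Fin 2 → ℝ) : j2 v - j2 w = j2 (v - w) := by
  funext k; fin_cases k <;> simp [j2] <;> ring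

lemma hblock_sum {n : ℕ} (m : Fin n → ℝ) (s : Fin n → Fin 2 → ℝ) (i : Fin n)
    (v : Fin n → Fin 2 → ℝ) :
    ∑ j, (hblock m s i j) *ᵥ (v j)
      = ∑ j ∈ Finset.univ.erase i, (hblockOff m s i j) *ᵥ (v j - v i) := by
  rw [← Finset.sum_erase_add _ _ (Finset.mem_univ i)]
  have h1 : hblock m s i i = -∑ k ∈ Finset.univ.erase i, hblockOff m s i k := by
    simp [hblock]
  have h2 : ∀ j ∈ Finset.univ.erase i, hblock m s i j *ᵥ v j = hblockOff m s i j *ᵥ v j := by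
    intro j hj
    have : i ≠ j := (Finset.ne_of_mem_erase hj).symm
    simp [hblock, this]
  rw [Finset.sum_congr rfl h2, h1, Matrix.neg_mulVec, my_sum_mulVec,
    ← sub_eq_add_neg, ← Finset.sum_sub_distrib]
  simp [Matrix.mulVec_sub]


/-- For a central configuration `s` with parameter `μ ≠ 0`,
`∇²V(s) s = −2μ M s` and `∇²V(s) Ĵs = μ M Ĵs`; equivalently, `M^{1/2}s` and
`M^{1/2}Ĵs` are eigenvectors of the normalized Hessian `H̃(s)` with eigenvalues
`−2` and `1`. -/
theorem hessian_eigenvectors_of_central_configuration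
    {n : ℕ} (hn : 2 ≤ n) (m : Fin n → ℝ) (hm : ∀ i, 0 < m i)
    (s : Fin n → Fin 2 → ℝ) (hsep : ∀ i j, i ≠ j → s i ≠ s j)
    (μ : ℝ) (hμ : μ ≠ 0) (hcc : ∀ i, gradV m s i = (μ * m i) • s i) :
    (∀ i, ∑ j, (hblock m s i j).mulVec (s j) = (-2 * μ * m i) • s i) ∧
    (∀ i, ∑ j, (hblock m s i j).mulVec (j2 (s j)) = (μ * m i) • j2 (s i)) := by
  constructor
  · intro i
    rw [hblock_sum]
    have h : ∀ j ∈ Finset.univ.erase i,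
        hblockOff m s i j *ᵥ (s j - s i)
          = (-2 : ℝ) • ((m i * m j / norm2 (s i - s j) ^ 3) • (s i - s j)) := by
      intro j hj
      have hij : i ≠ j := (Finset.ne_of_mem_erase hj).symm
      have hu : s i - s j ≠ 0 := sub_ne_zero.mpr (hsep i j hij)
      have : s j - s i = -(s i - s j) := by abel
      rw [this, Matrix.mulVec_neg, hblockOff, key_u _ _ hu]
      module
    rw [Finset.sum_congr rfl h, ← Finset.smul_sum]
    have : (∑ j ∈ Finset.univ.erase i,
        (m i * m j / norm2 (s i - s j) ^ 3) • (s i - s j)) = gradV m s i := rfl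
    rw [this, hcc i]
    module
  · intro i
    rw [hblock_sum]
    have h : ∀ j ∈ Finset.univ.erase i,
        hblockOff m s i j *ᵥ (j2 (s j) - j2 (s i))
          = j2 ((m i * m j / norm2 (s i - s j) ^ 3) • (s i - s j)) := by
      intro j hj
      have hij : i ≠ j := (Finset.ne_of_mem_erase hj).symm
      have hu : s i - s j ≠ 0 := sub_ne_zero.mpr (hsep i j hij)
      have h1 : j2 (s j) - j2 (s i) = -(j2 (s i - s j)) := by
        rw [← j2_sub]; abel
      rw [h1, Matrix.mulVec_neg, hblockOff, key_j _ _ hu, j2_smul]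
      module
    rw [Finset.sum_congr rfl h, ← j2_sum]
    have : (∑ j ∈ Finset.univ.erase i,
        (m i * m j / norm2 (s i - s j) ^ 3) • (s i - s j)) = gradV m s i := rfl
    rw [this, hcc i, j2_smul]
end

section
/- Let s = (s₁,…,sₙ) be a collinear central configuration with parameter μ > 0, i.e. s_i = (x_i, 0) with pairwise distinct x_i ∈ ℝ and ∇V(s) = μ M s. Define the symmetric n×n matrix C by C_ij = −√(m_i m_j)/(μ |x_i − x_j|³) for i ≠ j and C_ii = −∑_{j≠i} √(m_j/m_i) C_ij. Then: (i) the 2×2 blocks of the normalized Hessian satisfy H̃_ij(s) = C_ij · diag(−2, 1) for all i, j, where H̃(s) = μ⁻¹ M^{-1/2} ∇²V(s) M^{-1/2}; and (ii) if v = (v₁,…,vₙ) ∈ ℝⁿ satisfies Cv = λv, then the interleaved vectors v⁽¹⁾ = (v₁,0,v₂,0,…,vₙ,0) and v⁽²⁾ = (0,v₁,0,v₂,…,0,vₙ) satisfy H̃(s) v⁽¹⁾ = −2λ v⁽¹⁾, H̃(s) v⁽²⁾ = λ v⁽²⁾, Ĵ v⁽¹⁾ = v⁽²⁾ and Ĵ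 v⁽²⁾ = −v⁽¹⁾, where Ĵ = diag(J₂,…,J₂) with J₂ = [[0,−1],[1,0]]. -/
open Matrix Finset

/-- The symmetric matrix `C` of a collinear configuration:
`C_ij = −√(m_i m_j)/(μ|x_i−x_j|³)` for `i ≠ j`, `C_ii = −∑_{j≠i}√(m_j/m_i) C_ij`. -/
noncomputable def cmat {n : ℕ} (m : Fin n → ℝ) (μ : ℝ) (x : Fin n → ℝ)
    (i j : Fin n) : ℝ :=
  if i = j then
    -∑ k ∈ Finset.univ.erase i,
      Real.sqrt (m k / m i) * (-(Real.sqrt (m i * m k)) / (μ * |x i - x k| ^ 3))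
  else -(Real.sqrt (m i * m j)) / (μ * |x i - x j| ^ 3)

/-- For a collinear central configuration, (i) the blocks of the
normalized Hessian are `H̃_ij(s) = C_ij·diag(−2,1)`, and (ii) eigenvectors `v` of `C`
with eigenvalue `λ` yield interleaved eigenvectors `v⁽¹⁾, v⁽²⁾` of `H̃(s)` with
eigenvalues `−2λ` and `λ`, exchanged (up to sign) by `Ĵ`. -/
theorem collinear_normalized_hessian_blocks
    {n : ℕ} (hn : 2 ≤ n) (m : Fin n → ℝ) (hm : ∀ i, 0 < m i)
    (x : Fin n → ℝ) (hx : Function.Injective x)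
    (s : Fin n → Fin 2 → ℝ) (hs : s = fun i => ![x i, 0])
    (μ : ℝ) (hμ : 0 < μ) (hcc : ∀ i, gradV m s i = (μ * m i) • s i)
    (v : Fin n → ℝ) (lam : ℝ)
    (hv : (Matrix.of (cmat m μ x)).mulVec v = lam • v)
    (X1 X2 : Fin n → Fin 2 → ℝ)
    (hX1 : X1 = fun i => ![v i, 0]) (hX2 : X2 = fun i => ![0, v i]) :
    (∀ i j, (1 / (μ * Real.sqrt (m i * m j))) • hblock m s i j
        = cmat m μ x i j • Matrix.diagonal ![(-2 : ℝ), 1]) ∧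
    (∀ i, ∑ j, ((1 / (μ * Real.sqrt (m i * m j))) • hblock m s i j).mulVec (X1 j)
        = (-2 * lam) • X1 i) ∧
    (∀ i, ∑ j, ((1 / (μ * Real.sqrt (m i * m j))) • hblock m s i j).mulVec (X2 j)
        = lam • X2 i) ∧
    (∀ i, j2 (X1 i) = X2 i) ∧ (∀ i, j2 (X2 i) = -X1 i) := by
  subst hs hX1 hX2
  set s : Fin n → Fin 2 → ℝ := fun i => ![x i, 0] with hs
  have hCv : ∀ i, ∑ j, cmat m μ x i j * v j = lam * v i := by
    intro i
    have h := congrFun hv i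
    simpa [Matrix.mulVec, dotProduct] using h
  have hSpos : ∀ i j : Fin n, 0 < Real.sqrt (m i * m j) := fun i j =>
    Real.sqrt_pos.2 (mul_pos (hm i) (hm j))
  have hS2 : ∀ i j : Fin n, Real.sqrt (m i * m j) ^ 2 = m i * m j := fun i j =>
    Real.sq_sqrt (mul_pos (hm i) (hm j)).le
  have hnorm : ∀ i j : Fin n, norm2 (s i - s j) = |x i - x j| := by
    intro i j
    simp [norm2, hs, Real.sqrt_sq_eq_abs]
  -- off-diagonal block of the (unscaled) Hessian
  have hoff : ∀ i j : Fin n, i ≠ j →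
      hblockOff m s i j = -(m i * m j / |x i - x j| ^ 3) • Matrix.diagonal ![(-2 : ℝ), 1] := by
    intro i j hij
    have hd : x i - x j ≠ 0 := sub_ne_zero.2 fun h => hij (hx h)
    unfold hblockOff
    rw [hnorm]
    congr 1
    ext p q
    fin_cases p <;> fin_cases q <;>
      simp [vecMulVec_apply, Matrix.one_apply, sq_abs, hs] <;> field_simp <;> ring
  -- alternate form of the off-diagonal block, via cmat
  have hoff2 : ∀ i j : Fin n, i ≠ j →
      hblockOff m s i j
        = (μ * Real.sqrt (m i * m j) * cmat m μ x i j) • Matrix.diagonal ![(-2 : ℝ), 1] := by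
    intro i j hij
    rw [hoff i j hij]
    congr 1
    have hd : (0:ℝ) < |x i - x j| := abs_pos.2 (sub_ne_zero.2 fun h => hij (hx h))
    have habs : (0:ℝ) < |x i - x j| ^ 3 := by positivity
    have hss : Real.sqrt (m i * m j) * Real.sqrt (m i * m j) = m i * m j :=
      Real.mul_self_sqrt (mul_pos (hm i) (hm j)).le
    rw [cmat, if_neg hij, ← hss]
    have hS := (hSpos i j).ne'
    field_simp
    rw [Real.sqrt_sq (hSpos i j).le]
  -- part (i)
  have hkey : ∀ i j, (1 / (μ * Real.sqrt (m i * m j))) • hblock m s i j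
      = cmat m μ x i j • Matrix.diagonal ![(-2 : ℝ), 1] := by
    intro i j
    by_cases hij : i = j
    · subst hij
      have hmii : Real.sqrt (m i * m i) = m i := Real.sqrt_mul_self (hm i).le
      rw [hblock, if_pos rfl]
      have hsum : ∑ k ∈ Finset.univ.erase i, hblockOff m s i k
          = (∑ k ∈ Finset.univ.erase i,
              μ * Real.sqrt (m i * m k) * cmat m μ x i k) • Matrix.diagonal ![(-2:ℝ), 1] := by
        rw [Finset.sum_smul]
        refine Finset.sum_congr rfl fun k hk => ?_
        exact hoff2 i k (Ne.symm (Finset.ne_of_mem_erase hk))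
      rw [hsum, smul_neg, smul_smul]
      rw [show cmat m μ x i i • Matrix.diagonal ![(-2:ℝ),1]
          = -((-(cmat m μ x i i)) • Matrix.diagonal ![(-2:ℝ),1]) by rw [neg_smul, neg_neg]]
      congr 1
      congr 1
      rw [cmat, if_pos rfl, neg_neg, Finset.mul_sum]
      refine Finset.sum_congr rfl fun k hk => ?_
      have hki : k ≠ i := Finset.ne_of_mem_erase hk
      have hC : -(Real.sqrt (m i * m k)) / (μ * |x i - x k| ^ 3) = cmat m μ x i k := by
        rw [cmat, if_neg (Ne.symm hki)]
      rw [hC]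
      have hmi : (0:ℝ) < Real.sqrt (m i) := Real.sqrt_pos.2 (hm i)
      have hmul : Real.sqrt (m i) * Real.sqrt (m i) = m i := Real.mul_self_sqrt (hm i).le
      have key : Real.sqrt (m k / m i) * Real.sqrt (m i * m i) = Real.sqrt (m i * m k) := by
        rw [Real.sqrt_mul_self (hm i).le, Real.sqrt_div (hm k).le, Real.sqrt_mul (hm i).le]
        field_simp
        linear_combination -Real.sqrt (m k) * hmul
      have hSii := (hSpos i i).ne'
      rw [hmii] at key
      rw [hmii, ← key]
      field_simp
      rw [mul_assoc, mul_div_cancel_left₀ _ (hm i).ne']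
    · rw [hblock, if_neg hij, hoff2 i j hij, smul_smul]
      congr 1
      have hS := (hSpos i j).ne'
      field_simp
  have hmv : ∀ (c : ℝ) (w : Fin 2 → ℝ) (p : Fin 2),
      (c • Matrix.diagonal ![(-2:ℝ),1]).mulVec w p = c * ((![(-2:ℝ),1]) p * w p) := by
    intro c w p
    rw [Matrix.smul_mulVec]
    simp [Matrix.mulVec_diagonal]
    left; fin_cases p <;> simp
  have hsum1 : ∀ (i : Fin n) (p : Fin 2) (w : Fin n → Fin 2 → ℝ),
      (∑ j, ((1 / (μ * Real.sqrt (m i * m j))) • hblock m s i j).mulVec (w j)) p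
        = ∑ j, cmat m μ x i j * ((![(-2:ℝ),1]) p * w j p) := by
    intro i p w
    rw [Finset.sum_apply]
    exact Finset.sum_congr rfl fun j _ => by rw [hkey i j]; exact hmv _ _ _
  refine ⟨hkey, ?_, ?_, ?_, ?_⟩
  · intro i
    funext p
    rw [hsum1]
    fin_cases p <;> simp only [Matrix.cons_val_zero, Matrix.cons_val_one, Matrix.head_cons,
      Pi.smul_apply, smul_eq_mul, Fin.isValue, Fin.zero_eta, Fin.mk_one]
    · have h2 : ∑ j, cmat m μ x i j * (-2 * v j) = -2 * ∑ j, cmat m μ x i j * v j := by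
        rw [Finset.mul_sum]
        exact Finset.sum_congr rfl fun j _ => by ring
      rw [h2, hCv i]; ring
    · simp
  · intro i
    funext p
    rw [hsum1]
    fin_cases p <;> simp only [Matrix.cons_val_zero, Matrix.cons_val_one, Matrix.head_cons,
      Pi.smul_apply, smul_eq_mul, Fin.isValue, Fin.zero_eta, Fin.mk_one]
    · simp
    · have h2 : ∑ j, cmat m μ x i j * (1 * v j) = ∑ j, cmat m μ x i j * v j := by
        exact Finset.sum_congr rfl fun j _ => by ring
      rw [h2, hCv i]
  · intro i
    funext p
    fin_cases p <;> simp [j2]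
  · intro i
    funext p
    fin_cases p <;> simp [j2]
end

section
/- Let s_i = (x_i, 0), i = 1,…,n with n ≥ 3, be a collinear central configuration of the planar n-body problem with positive masses m₁,…,mₙ and parameter μ > 0, with pairwise distinct x_i. Define the symmetric n×n matrix C by C_ij = −√(m_i m_j)/(μ |x_i − x_j|³) for i ≠ j and C_ii = −∑_{j≠i} √(m_j/m_i) C_ij. Then all eigenvalues of C are real and, ordered appropriately as λ₁ ≥ ⋯ ≥ λₙ, they satisfy λₙ = 0, λ_{n−1} = 1, and λ_i > 1 for i = 1,…,n−2. -/
open Matrix Finset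

lemma sorted_key_max {n : ℕ} (m : Fin n → ℝ) (hm : ∀ i, 0 < m i)
    (μ : ℝ) (hμ : 0 < μ) (x : Fin n → ℝ) (hx : StrictMono x)
    (hxcc : ∀ i, ∑ j, m j / |x i - x j| ^ 3 * (x i - x j) = μ * x i)
    (u : Fin n → ℝ) (lam : ℝ)
    (hu : ∀ i, ∑ j, m j / |x i - x j| ^ 3 * (u i - u j) = lam * μ * u i)
    (k : ℕ) (hk : k + 1 < n)
    (hZ : 0 < (u ⟨k+1, hk⟩ - u ⟨k, by omega⟩) / (x ⟨k+1, hk⟩ - x ⟨k, by omega⟩))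
    (hmax : ∀ l (hl : l + 1 < n),
      (u ⟨l+1, hl⟩ - u ⟨l, by omega⟩) / (x ⟨l+1, hl⟩ - x ⟨l, by omega⟩) ≤
      (u ⟨k+1, hk⟩ - u ⟨k, by omega⟩) / (x ⟨k+1, hk⟩ - x ⟨k, by omega⟩)) :
    1 ≤ lam ∧ (lam = 1 → ∃ a, ∀ i, u i = a * x i) := by
  have hn2 : 2 ≤ n := by omega
  set ib : Fin n := ⟨k, by omega⟩ with hib
  set ia : Fin n := ⟨k+1, hk⟩ with hia
  have hlt : ib < ia := Fin.lt_def.2 (show k < k+1 by omega)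
  have he : 0 < x ia - x ib := sub_pos.2 (hx hlt)
  set Z : ℝ := (u ia - u ib) / (x ia - x ib) with hZdef
  have hZpos : 0 < Z := hZ
  have huZ : u ia - u ib = Z * (x ia - x ib) := by
    rw [hZdef, div_mul_cancel₀]
    exact ne_of_gt he
  set p : Fin n → ℝ := fun i => u i - Z * x i with hp
  -- consecutive monotonicity of p
  have hpconsec : ∀ l (hl : l + 1 < n), p ⟨l+1, hl⟩ ≤ p ⟨l, by omega⟩ := by
    intro l hl
    have h1 := hmax l hl
    have hel : (0:ℝ) < x ⟨l+1, hl⟩ - x ⟨l, by omega⟩ :=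
      sub_pos.2 (hx (by simp [Fin.lt_def]))
    rw [div_le_iff₀ hel] at h1
    simp only [hp]
    nlinarith [h1]
  -- global antitonicity of p
  have hpanti : ∀ i j : Fin n, i ≤ j → p j ≤ p i := by
    have hq : ∀ (b a : ℕ) (hb : b < n) (ha : a < n), a ≤ b → p ⟨b, hb⟩ ≤ p ⟨a, ha⟩ := by
      intro b
      induction b with
      | zero =>
          intro a hb ha hab
          have : a = 0 := by omega
          subst this; exact le_of_eq rfl
      | succ c ih =>
          intro a hb ha hab
          rcases Nat.lt_or_ge a (c+1) with hc | hc
          · have h1 : c < n := by omega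
            exact le_trans (hpconsec c hb) (ih a h1 ha (by omega))
          · have : a = c+1 := by omega
            subst this; exact le_of_eq rfl
    intro i j hij
    exact hq j.val i.val j.isLt i.isLt hij
  have hpia : p ia = p ib := by
    simp only [hp]
    nlinarith [huZ]
  -- action of A on p
  have hAp : ∀ i : Fin n, (∑ j, m j / |x i - x j| ^ 3 * (p i - p j))
      = lam * μ * u i - Z * (μ * x i) := by
    intro i
    have hsplit : ∀ j : Fin n, m j / |x i - x j| ^ 3 * (p i - p j)
        = m j / |x i - x j| ^ 3 * (u i - u j)
          - Z * (m j / |x i - x j| ^ 3 * (x i - x j)) := by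
      intro j; simp only [hp]; ring
    rw [Finset.sum_congr rfl (fun j _ => hsplit j), Finset.sum_sub_distrib,
      ← Finset.mul_sum, hu i, hxcc i]
  -- the key sum G
  set G : ℝ := ∑ j, (m j / |x ia - x j| ^ 3 - m j / |x ib - x j| ^ 3) * (p ib - p j)
    with hGdef
  have hG1 : G = (lam - 1) * (μ * (Z * (x ia - x ib))) := by
    have h1 : (∑ j, m j / |x ia - x j| ^ 3 * (p ib - p j))
        = lam * μ * u ia - Z * (μ * x ia) := by
      rw [← hAp ia]
      exact Finset.sum_congr rfl fun j _ => by rw [hpia]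
    have h2 := hAp ib
    have h3 : G = (∑ j, m j / |x ia - x j| ^ 3 * (p ib - p j))
        - ∑ j, m j / |x ib - x j| ^ 3 * (p ib - p j) := by
      rw [hGdef, ← Finset.sum_sub_distrib]
      exact Finset.sum_congr rfl fun j _ => by ring
    rw [h3, h1, h2]
    have : lam * μ * u ia - Z * (μ * x ia) - (lam * μ * u ib - Z * (μ * x ib))
        = lam * μ * (u ia - u ib) - Z * μ * (x ia - x ib) := by ring
    rw [this, huZ]; ring
  -- per-term nonnegativity
  have hterm : ∀ j : Fin n,
      0 ≤ (m j / |x ia - x j| ^ 3 - m j / |x ib - x j| ^ 3) * (p ib - p j) := by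
    intro j
    rcases lt_trichotomy (j : ℕ) k with hj | hj | hj
    · -- j < ib < ia : coefficient < 0, p ib - p j ≤ 0
      have hjb : j < ib := Fin.lt_def.2 hj
      have hxj : x j < x ib := hx hjb
      have hxj' : x j < x ia := hx (hjb.trans hlt)
      have hab1 : |x ia - x j| = x ia - x j := abs_of_pos (by linarith)
      have hab2 : |x ib - x j| = x ib - x j := abs_of_pos (by linarith)
      have hcoef : m j / |x ia - x j| ^ 3 - m j / |x ib - x j| ^ 3 < 0 := by
        rw [hab1, hab2, sub_neg]
        apply div_lt_div_of_pos_left (hm j) (pow_pos (by linarith) 3)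
        have h1 : x ib - x j < x ia - x j := by linarith
        exact pow_lt_pow_left₀ h1 (by linarith) (by norm_num)
      have hple : p ib ≤ p j := hpanti j ib (le_of_lt hjb)
      have := mul_nonneg_of_nonpos_of_nonpos (le_of_lt hcoef) (by linarith : p ib - p j ≤ 0)
      linarith
    · -- j = ib
      have : j = ib := by
        apply Fin.ext; simpa using hj
      rw [this]; simp
    · rcases Nat.lt_or_ge (k+1) (j : ℕ) with hj2 | hj2
      · -- ia < j : coefficient > 0, p ib - p j ≥ 0
        have hja : ia < j := Fin.lt_def.2 hj2
        have hxj : x ia < x j := hx hja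
        have hxj' : x ib < x j := hx (hlt.trans hja)
        have hab1 : |x ia - x j| = x j - x ia := by
          rw [abs_sub_comm]; exact abs_of_pos (by linarith)
        have hab2 : |x ib - x j| = x j - x ib := by
          rw [abs_sub_comm]; exact abs_of_pos (by linarith)
        have hcoef : 0 < m j / |x ia - x j| ^ 3 - m j / |x ib - x j| ^ 3 := by
          rw [hab1, hab2, sub_pos]
          apply div_lt_div_of_pos_left (hm j) (pow_pos (by linarith) 3)
          have h1 : x j - x ia < x j - x ib := by linarith
          exact pow_lt_pow_left₀ h1 (by linarith) (by norm_num)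
        have hple : p j ≤ p ib := hpanti ib j (le_of_lt (hlt.trans hja))
        have := mul_nonneg (le_of_lt hcoef) (by linarith : 0 ≤ p ib - p j)
        linarith
      · -- j = ia
        have : j = ia := by
          apply Fin.ext; simp only [hia]; omega
        rw [this, hpia]; simp
  have hGnn : 0 ≤ G := Finset.sum_nonneg fun j _ => hterm j
  have hlam1 : 1 ≤ lam := by
    rw [hG1] at hGnn
    nlinarith [mul_pos hμ (mul_pos hZpos he)]
  refine ⟨hlam1, fun hl1 => ?_⟩
  have hG0 : G = 0 := by rw [hG1, hl1]; ring
  have hterm0 := (Finset.sum_eq_zero_iff_of_nonneg (fun j _ => hterm j)).1 hG0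
  -- all p equal to p ib
  have hpc : ∀ i : Fin n, p i = p ib := by
    intro i
    rcases lt_trichotomy (i : ℕ) k with hj | hj | hj
    · have hjb : i < ib := Fin.lt_def.2 hj
      have hxj : x i < x ib := hx hjb
      have hxj' : x i < x ia := hx (hjb.trans hlt)
      have hab1 : |x ia - x i| = x ia - x i := abs_of_pos (by linarith)
      have hab2 : |x ib - x i| = x ib - x i := abs_of_pos (by linarith)
      have hcoef : m i / |x ia - x i| ^ 3 - m i / |x ib - x i| ^ 3 < 0 := by
        rw [hab1, hab2, sub_neg]
        apply div_lt_div_of_pos_left (hm i) (pow_pos (by linarith) 3)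
        have h1 : x ib - x i < x ia - x i := by linarith
        exact pow_lt_pow_left₀ h1 (by linarith) (by norm_num)
      have := hterm0 i (Finset.mem_univ i)
      have hzero : p ib - p i = 0 := by
        rcases mul_eq_zero.1 this with h | h
        · exact absurd h (ne_of_lt hcoef)
        · exact h
      linarith [hzero]
    · have : i = ib := by apply Fin.ext; simpa using hj
      rw [this]
    · rcases Nat.lt_or_ge (k+1) (i : ℕ) with hj2 | hj2
      · have hja : ia < i := Fin.lt_def.2 hj2
        have hxj : x ia < x i := hx hja
        have hxj' : x ib < x i := hx (hlt.trans hja)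
        have hab1 : |x ia - x i| = x i - x ia := by
          rw [abs_sub_comm]; exact abs_of_pos (by linarith)
        have hab2 : |x ib - x i| = x i - x ib := by
          rw [abs_sub_comm]; exact abs_of_pos (by linarith)
        have hcoef : 0 < m i / |x ia - x i| ^ 3 - m i / |x ib - x i| ^ 3 := by
          rw [hab1, hab2, sub_pos]
          apply div_lt_div_of_pos_left (hm i) (pow_pos (by linarith) 3)
          have h1 : x i - x ia < x i - x ib := by linarith
          exact pow_lt_pow_left₀ h1 (by linarith) (by norm_num)
        have := hterm0 i (Finset.mem_univ i)
        have hzero : p ib - p i = 0 := by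
          rcases mul_eq_zero.1 this with h | h
          · exact absurd h (ne_of_gt hcoef)
          · exact h
        linarith [hzero]
      · have : i = ia := by apply Fin.ext; simp only [hia]; omega
        rw [this, hpia]
  -- p ib = 0
  have hc0 : p ib = 0 := by
    have h2 := hAp ib
    have hzero : (∑ j, m j / |x ib - x j| ^ 3 * (p ib - p j)) = 0 :=
      Finset.sum_eq_zero fun j _ => by rw [hpc j]; ring
    rw [hzero, hl1] at h2
    have hpb : p ib = u ib - Z * x ib := rfl
    nlinarith [h2]
  exact ⟨Z, fun i => by have h := hpc i; rw [hc0] at h; simp only [hp] at h; linarith⟩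

lemma sorted_key {n : ℕ} (m : Fin n → ℝ) (hm : ∀ i, 0 < m i)
    (μ : ℝ) (hμ : 0 < μ) (x : Fin n → ℝ) (hx : StrictMono x)
    (hxcc : ∀ i, ∑ j, m j / |x i - x j| ^ 3 * (x i - x j) = μ * x i)
    (u : Fin n → ℝ) (lam : ℝ)
    (hu : ∀ i, ∑ j, m j / |x i - x j| ^ 3 * (u i - u j) = lam * μ * u i) :
    (∀ i j, u i = u j) ∨ (1 < lam) ∨ (lam = 1 ∧ ∃ a, ∀ i, u i = a * x i) := by
  by_cases hconst : ∀ i j : Fin n, u i = u j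
  · exact Or.inl hconst
  right
  have hn2 : 2 ≤ n := by
    by_contra h
    exact hconst fun i j => by
      have : i = j := Fin.ext (by omega)
      rw [this]
  -- some consecutive difference is nonzero
  have hne : ∃ l, ∃ hl : l + 1 < n, u ⟨l+1, hl⟩ ≠ u ⟨l, by omega⟩ := by
    by_contra hc
    push_neg at hc
    apply hconst
    have hq : ∀ (b : ℕ) (hb : b < n), u ⟨b, hb⟩ = u ⟨0, by omega⟩ := by
      intro b
      induction b with
      | zero => intro hb; rfl
      | succ c ih => intro hb; rw [hc c hb]; exact ih (by omega)
    intro i j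
    have h1 := hq i.val i.isLt
    have h2 := hq j.val j.isLt
    simp only [Fin.eta] at h1 h2
    rw [h1, h2]
  classical
  set zf : ℕ → ℝ := fun l =>
    if h : l + 1 < n then (u ⟨l+1, h⟩ - u ⟨l, by omega⟩) / (x ⟨l+1, h⟩ - x ⟨l, by omega⟩)
    else 0 with hzf
  obtain ⟨l0, hl0n, hl0ne⟩ := hne
  have hel0 : (0:ℝ) < x ⟨l0+1, hl0n⟩ - x ⟨l0, by omega⟩ :=
    sub_pos.2 (hx (by simp [Fin.lt_def]))
  have hzl0 : zf l0 ≠ 0 := by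
    rw [hzf]; simp only [dif_pos hl0n]
    exact div_ne_zero (sub_ne_zero.2 hl0ne) (ne_of_gt hel0)
  obtain ⟨kx, hkxmem, hkxmax⟩ :=
    Finset.exists_max_image (Finset.range (n-1)) zf ⟨l0, Finset.mem_range.2 (by omega)⟩
  have hkx : kx + 1 < n := by
    have := Finset.mem_range.1 hkxmem; omega
  by_cases hpos : 0 < zf kx
  · -- use u directly
    have hres := sorted_key_max m hm μ hμ x hx hxcc u lam hu kx hkx
      (by rw [hzf] at hpos; simpa only [dif_pos hkx] using hpos)
      (by
        intro l hl
        have h1 := hkxmax l (Finset.mem_range.2 (by omega))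
        rw [hzf] at h1
        simpa only [dif_pos hl, dif_pos hkx] using h1)
    rcases lt_or_eq_of_le hres.1 with h | h
    · exact Or.inl h
    · exact Or.inr ⟨h.symm, hres.2 h.symm⟩
  · -- use -u
    push_neg at hpos
    obtain ⟨kn, hknmem, hknmin⟩ :=
      Finset.exists_min_image (Finset.range (n-1)) zf ⟨l0, Finset.mem_range.2 (by omega)⟩
    have hkn : kn + 1 < n := by
      have := Finset.mem_range.1 hknmem; omega
    have hznlt : zf kn < 0 := by
      have h1 := hknmin l0 (Finset.mem_range.2 (by omega))
      have h2 := hkxmax l0 (Finset.mem_range.2 (by omega))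
      exact lt_of_le_of_lt h1 (lt_of_le_of_ne (le_trans h2 hpos) hzl0)
    have hu' : ∀ i, ∑ j, m j / |x i - x j| ^ 3 * ((-u) i - (-u) j) = lam * μ * (-u) i := by
      intro i
      have := hu i
      simp only [Pi.neg_apply]
      have hrw : ∀ j : Fin n, m j / |x i - x j| ^ 3 * (-u i - -u j)
          = -(m j / |x i - x j| ^ 3 * (u i - u j)) := fun j => by ring
      rw [Finset.sum_congr rfl fun j _ => hrw j, Finset.sum_neg_distrib, this]
      ring
    have hres := sorted_key_max m hm μ hμ x hx hxcc (-u) lam hu' kn hkn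
      (by
        rw [hzf] at hznlt
        simp only [dif_pos hkn] at hznlt
        simp only [Pi.neg_apply]
        rw [show ((-u ⟨kn+1, hkn⟩ - -u ⟨kn, by omega⟩ : ℝ))
            = -(u ⟨kn+1, hkn⟩ - u ⟨kn, by omega⟩) from by ring, neg_div]
        linarith)
      (by
        intro l hl
        have h1 := hknmin l (Finset.mem_range.2 (by omega))
        rw [hzf] at h1
        simp only [dif_pos hl, dif_pos hkn] at h1
        simp only [Pi.neg_apply]
        rw [show ((-u ⟨l+1, hl⟩ - -u ⟨l, by omega⟩ : ℝ))
            = -(u ⟨l+1, hl⟩ - u ⟨l, by omega⟩) from by ring, neg_div,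
          show ((-u ⟨kn+1, hkn⟩ - -u ⟨kn, by omega⟩ : ℝ))
            = -(u ⟨kn+1, hkn⟩ - u ⟨kn, by omega⟩) from by ring, neg_div]
        linarith)
    rcases lt_or_eq_of_le hres.1 with h | h
    · exact Or.inl h
    · refine Or.inr ⟨h.symm, ?_⟩
      obtain ⟨a, ha⟩ := hres.2 h.symm
      exact ⟨-a, fun i => by have := ha i; simp only [Pi.neg_apply] at this; linarith⟩

lemma key_lemma {n : ℕ} (m : Fin n → ℝ) (hm : ∀ i, 0 < m i)
    (μ : ℝ) (hμ : 0 < μ) (x : Fin n → ℝ) (hx : Function.Injective x)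
    (hxcc : ∀ i, ∑ j, m j / |x i - x j| ^ 3 * (x i - x j) = μ * x i)
    (u : Fin n → ℝ) (lam : ℝ)
    (hu : ∀ i, ∑ j, m j / |x i - x j| ^ 3 * (u i - u j) = lam * μ * u i) :
    (∀ i j, u i = u j) ∨ (1 < lam) ∨ (lam = 1 ∧ ∃ a, ∀ i, u i = a * x i) := by
  set σ := Tuple.sort x with hσ
  have hmono : StrictMono (x ∘ σ) :=
    (Tuple.monotone_sort x).strictMono_of_injective (hx.comp σ.injective)
  have hxcc' : ∀ i, ∑ j, (m ∘ σ) j / |(x ∘ σ) i - (x ∘ σ) j| ^ 3 * ((x ∘ σ) i - (x ∘ σ) j)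
      = μ * (x ∘ σ) i := by
    intro i
    have h := hxcc (σ i)
    rw [← Equiv.sum_comp σ (fun j => m j / |x (σ i) - x j| ^ 3 * (x (σ i) - x j))] at h
    exact h
  have hu' : ∀ i, ∑ j, (m ∘ σ) j / |(x ∘ σ) i - (x ∘ σ) j| ^ 3 * ((u ∘ σ) i - (u ∘ σ) j)
      = lam * μ * (u ∘ σ) i := by
    intro i
    have h := hu (σ i)
    rw [← Equiv.sum_comp σ (fun j => m j / |x (σ i) - x j| ^ 3 * (u (σ i) - u j))] at h
    exact h
  rcases sorted_key (m ∘ σ) (fun i => hm _) μ hμ (x ∘ σ) hmono hxcc' (u ∘ σ) lam hu'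
    with h | h | ⟨h1, a, ha⟩
  · left
    intro i j
    have := h (σ.symm i) (σ.symm j)
    simpa [Function.comp] using this
  · exact Or.inr (Or.inl h)
  · refine Or.inr (Or.inr ⟨h1, a, fun i => ?_⟩)
    have := ha (σ.symm i)
    simpa [Function.comp] using this

lemma cmat_isHermitian {n : ℕ} (m : Fin n → ℝ) (μ : ℝ) (x : Fin n → ℝ) :
    (Matrix.of (cmat m μ x)).IsHermitian := by
  rw [Matrix.IsHermitian]
  ext i j
  simp only [Matrix.conjTranspose_apply, Matrix.of_apply, star_trivial]
  unfold cmat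
  by_cases h : i = j
  · subst h; rfl
  · rw [if_neg (Ne.symm h), if_neg h, mul_comm (m j) (m i), abs_sub_comm (x j) (x i)]

lemma cmat_mulVec {n : ℕ} (m : Fin n → ℝ) (hm : ∀ i, 0 < m i)
    (μ : ℝ) (hμ : 0 < μ) (x : Fin n → ℝ) (hx : Function.Injective x)
    (v : Fin n → ℝ) (i : Fin n) :
    (Matrix.of (cmat m μ x)).mulVec v i
      = Real.sqrt (m i) / μ *
        ∑ j, m j / |x i - x j| ^ 3 * (v i / Real.sqrt (m i) - v j / Real.sqrt (m j)) := by
  classical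
  have hmulVec : (Matrix.of (cmat m μ x)).mulVec v i = ∑ j, cmat m μ x i j * v j := by
    simp [Matrix.mulVec, dotProduct]
  -- the diagonal entry
  have hdiag : cmat m μ x i i = ∑ k ∈ Finset.univ.erase i, m k / (μ * |x i - x k| ^ 3) := by
    unfold cmat
    rw [if_pos rfl, neg_eq_iff_eq_neg, ← Finset.sum_neg_distrib]
    refine Finset.sum_congr rfl fun k hk => ?_
    have hki : k ≠ i := Finset.ne_of_mem_erase hk
    have h1 : Real.sqrt (m k / m i) * Real.sqrt (m i * m k) = m k := by
      rw [← Real.sqrt_mul (div_nonneg (hm k).le (hm i).le)]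
      rw [show m k / m i * (m i * m k) = m k ^ 2 by field_simp [(hm i).ne']]
      exact Real.sqrt_sq (hm k).le
    rw [show Real.sqrt (m k / m i) * (-Real.sqrt (m i * m k) / (μ * |x i - x k| ^ 3))
        = -(Real.sqrt (m k / m i) * Real.sqrt (m i * m k) / (μ * |x i - x k| ^ 3)) from by ring,
      h1]
  -- RHS sum: the i-term vanishes
  have hrhs : (∑ j, m j / |x i - x j| ^ 3 * (v i / Real.sqrt (m i) - v j / Real.sqrt (m j)))
      = ∑ j ∈ Finset.univ.erase i,
          m j / |x i - x j| ^ 3 * (v i / Real.sqrt (m i) - v j / Real.sqrt (m j)) := by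
    rw [Finset.sum_erase _ (by simp)]
  rw [hmulVec, hrhs, ← Finset.sum_erase_add _ _ (Finset.mem_univ i), hdiag,
    Finset.sum_mul, Finset.mul_sum, ← Finset.sum_add_distrib]
  refine Finset.sum_congr rfl fun j hj => ?_
  have hji : j ≠ i := Finset.ne_of_mem_erase hj
  have hd : |x i - x j| ^ 3 ≠ 0 := by
    have h0 : x i ≠ x j := fun hc => hji (hx hc).symm
    exact pow_ne_zero 3 (abs_ne_zero.2 (sub_ne_zero.2 h0))
  have hsi : Real.sqrt (m i) ≠ 0 := Real.sqrt_ne_zero'.2 (hm i)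
  have hsj : Real.sqrt (m j) ≠ 0 := Real.sqrt_ne_zero'.2 (hm j)
  have hmj : m j = Real.sqrt (m j) * Real.sqrt (m j) := (Real.mul_self_sqrt (hm j).le).symm
  unfold cmat
  rw [if_neg (fun hc : i = j => hji hc.symm), Real.sqrt_mul (hm i).le]
  rw [hmj]
  rw [Real.sqrt_mul_self (Real.sqrt_nonneg _)]
  field_simp
  ring

lemma cmat_eig {n : ℕ} (m : Fin n → ℝ) (hm : ∀ i, 0 < m i)
    (μ : ℝ) (hμ : 0 < μ) (x : Fin n → ℝ) (hx : Function.Injective x)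
    (v : Fin n → ℝ) (lam : ℝ)
    (hv : (Matrix.of (cmat m μ x)).mulVec v = lam • v) :
    ∀ i, (∑ j, m j / |x i - x j| ^ 3 *
        (v i / Real.sqrt (m i) - v j / Real.sqrt (m j)))
      = lam * μ * (v i / Real.sqrt (m i)) := by
  intro i
  have h := congrFun hv i
  rw [cmat_mulVec m hm μ hμ x hx v i] at h
  have hsi : Real.sqrt (m i) ≠ 0 := Real.sqrt_ne_zero'.2 (hm i)
  have h2 : (lam • v) i = lam * v i := rfl
  rw [h2] at h
  have h3 : (∑ j, m j / |x i - x j| ^ 3 *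
      (v i / Real.sqrt (m i) - v j / Real.sqrt (m j)))
      = μ / Real.sqrt (m i) * (Real.sqrt (m i) / μ *
        ∑ j, m j / |x i - x j| ^ 3 *
          (v i / Real.sqrt (m i) - v j / Real.sqrt (m j))) := by
    have hone : μ / Real.sqrt (m i) * (Real.sqrt (m i) / μ) = 1 := by
      field_simp
    rw [← mul_assoc, hone, one_mul]
  rw [h3, h]
  field_simp

lemma cmat_eig_zero {n : ℕ} (m : Fin n → ℝ) (hm : ∀ i, 0 < m i)
    (μ : ℝ) (hμ : 0 < μ) (x : Fin n → ℝ) (hx : Function.Injective x) :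
    (Matrix.of (cmat m μ x)).mulVec (fun i => Real.sqrt (m i))
      = (0:ℝ) • (fun i => Real.sqrt (m i)) := by
  funext i
  rw [cmat_mulVec m hm μ hμ x hx _ i]
  have : ∀ j : Fin n, m j / |x i - x j| ^ 3 *
      (Real.sqrt (m i) / Real.sqrt (m i) - Real.sqrt (m j) / Real.sqrt (m j)) = 0 := by
    intro j
    rw [div_self (Real.sqrt_ne_zero'.2 (hm i)), div_self (Real.sqrt_ne_zero'.2 (hm j))]
    ring
  rw [Finset.sum_eq_zero fun j _ => this j]
  simp

lemma cmat_eig_one {n : ℕ} (m : Fin n → ℝ) (hm : ∀ i, 0 < m i)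
    (μ : ℝ) (hμ : 0 < μ) (x : Fin n → ℝ) (hx : Function.Injective x)
    (hxcc : ∀ i, ∑ j, m j / |x i - x j| ^ 3 * (x i - x j) = μ * x i) :
    (Matrix.of (cmat m μ x)).mulVec (fun i => Real.sqrt (m i) * x i)
      = (1:ℝ) • (fun i => Real.sqrt (m i) * x i) := by
  funext i
  rw [cmat_mulVec m hm μ hμ x hx _ i]
  have : ∀ j : Fin n, m j / |x i - x j| ^ 3 *
      (Real.sqrt (m i) * x i / Real.sqrt (m i) - Real.sqrt (m j) * x j / Real.sqrt (m j))
      = m j / |x i - x j| ^ 3 * (x i - x j) := by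
    intro j
    have e1 : Real.sqrt (m i) * x i / Real.sqrt (m i) = x i := by
      rw [mul_comm, mul_div_assoc, div_self (Real.sqrt_ne_zero'.2 (hm i)), mul_one]
    have e2 : Real.sqrt (m j) * x j / Real.sqrt (m j) = x j := by
      rw [mul_comm, mul_div_assoc, div_self (Real.sqrt_ne_zero'.2 (hm j)), mul_one]
    rw [e1, e2]
  rw [Finset.sum_congr rfl fun j _ => this j, hxcc i]
  have hsi : Real.sqrt (m i) ≠ 0 := Real.sqrt_ne_zero'.2 (hm i)
  rw [Pi.smul_apply, one_smul]
  field_simp [hμ.ne']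

lemma classify {n : ℕ} (m : Fin n → ℝ) (hm : ∀ i, 0 < m i)
    (μ : ℝ) (hμ : 0 < μ) (x : Fin n → ℝ) (hx : Function.Injective x)
    (hxcc : ∀ i, ∑ j, m j / |x i - x j| ^ 3 * (x i - x j) = μ * x i)
    (v : Fin n → ℝ) (lam : ℝ) (hv0 : v ≠ 0)
    (hv : (Matrix.of (cmat m μ x)).mulVec v = lam • v) :
    (lam = 0 ∧ ∃ c : ℝ, c ≠ 0 ∧ ∀ i, v i = c * Real.sqrt (m i)) ∨ 1 < lam ∨
    (lam = 1 ∧ ∃ a : ℝ, a ≠ 0 ∧ ∀ i, v i = a * (Real.sqrt (m i) * x i)) := by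
  set u : Fin n → ℝ := fun i => v i / Real.sqrt (m i) with hu
  have hueq := cmat_eig m hm μ hμ x hx v lam hv
  have hvi : ∀ i, v i = Real.sqrt (m i) * u i := by
    intro i
    have hsi : Real.sqrt (m i) ≠ 0 := Real.sqrt_ne_zero'.2 (hm i)
    show v i = Real.sqrt (m i) * (v i / Real.sqrt (m i))
    rw [mul_comm, div_mul_cancel₀ _ hsi]
  have hune : ∃ i, u i ≠ 0 := by
    by_contra hc
    push_neg at hc
    exact hv0 (funext fun i => by rw [hvi i, hc i, mul_zero]; rfl)
  rcases key_lemma m hm μ hμ x hx hxcc u lam hueq with h | h | ⟨h1, a, ha⟩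
  · left
    obtain ⟨i0, hi0⟩ := hune
    have hlam : lam = 0 := by
      have h0 := hueq i0
      rw [Finset.sum_eq_zero (fun j _ => by
        show m j / |x i0 - x j| ^ 3 * (u i0 - u j) = 0
        rw [show u i0 = u j from h i0 j]; ring)] at h0
      rcases mul_eq_zero.1 h0.symm with h' | h'
      · rcases mul_eq_zero.1 h' with h'' | h''
        · exact h''
        · exact absurd h'' hμ.ne'
      · exact absurd h' hi0
    exact ⟨hlam, u i0, hi0, fun i => by rw [hvi i, show u i = u i0 from h i i0]; ring⟩
  · exact Or.inr (Or.inl h)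
  · refine Or.inr (Or.inr ⟨h1, a, ?_, fun i => by rw [hvi i, ha i]; ring⟩)
    intro hc
    obtain ⟨i0, hi0⟩ := hune
    exact hi0 (by rw [ha i0, hc, zero_mul])

lemma exists_eig_eq {n : ℕ} (C : Matrix (Fin n) (Fin n) ℝ) (hsym : Cᵀ = C)
    (w : Fin n → Fin n → ℝ) (horth : ∀ k l, w k ⬝ᵥ w l = if k = l then 1 else 0)
    (es : Fin n → ℝ) (heig : ∀ k, C.mulVec (w k) = es k • w k)
    (y : Fin n → ℝ) (hy0 : y ≠ 0) (t : ℝ) (hy : C.mulVec y = t • y) :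
    ∃ k, es k = t := by
  classical
  by_contra hc
  push_neg at hc
  have hdot : ∀ k, w k ⬝ᵥ y = 0 := by
    intro k
    have h1 : w k ⬝ᵥ (C.mulVec y) = t * (w k ⬝ᵥ y) := by
      rw [hy, dotProduct_smul]
      simp
    have h2 : w k ⬝ᵥ (C.mulVec y) = es k * (w k ⬝ᵥ y) := by
      rw [Matrix.dotProduct_mulVec, ← Matrix.mulVec_transpose, hsym, heig k,
        smul_dotProduct]
      simp
    have h3 : (t - es k) * (w k ⬝ᵥ y) = 0 := by rw [sub_mul, ← h1, ← h2]; ring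
    rcases mul_eq_zero.1 h3 with h | h
    · exact absurd (by linarith [sub_eq_zero.1 h] : es k = t) (hc k)
    · exact h
  set W : Matrix (Fin n) (Fin n) ℝ := Matrix.of w with hW
  have hWWT : W * Wᵀ = 1 := by
    ext k l
    rw [Matrix.mul_apply, Matrix.one_apply, ← horth k l]
    simp [dotProduct, hW]
  have hWTW : Wᵀ * W = 1 := mul_eq_one_comm.1 hWWT
  have hWy : W.mulVec y = 0 := by
    funext k
    rw [show W.mulVec y k = w k ⬝ᵥ y from rfl, hdot k]
    rfl
  have hy' : y = 0 := by
    have h3 : (Wᵀ * W).mulVec y = y := by rw [hWTW, Matrix.one_mulVec]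
    rw [← Matrix.mulVec_mulVec, hWy, Matrix.mulVec_zero] at h3
    exact h3.symm
  exact hy0 hy'

lemma hcc_to_A {n : ℕ} (m : Fin n → ℝ) (hm : ∀ i, 0 < m i)
    (μ : ℝ) (x : Fin n → ℝ)
    (hcc : ∀ i, (∑ j ∈ Finset.univ.erase i,
        m i * m j * (x i - x j) / |x i - x j| ^ 3) = μ * m i * x i) :
    ∀ i, ∑ j, m j / |x i - x j| ^ 3 * (x i - x j) = μ * x i := by
  intro i
  have h := hcc i
  rw [Finset.sum_erase _ (by simp)] at h
  have h2 : ∀ j : Fin n, m i * m j * (x i - x j) / |x i - x j| ^ 3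
      = m i * (m j / |x i - x j| ^ 3 * (x i - x j)) := by
    intro j
    rw [div_eq_mul_inv, div_eq_mul_inv]
    ring
  rw [Finset.sum_congr rfl fun j _ => h2 j, ← Finset.mul_sum] at h
  have h3 : m i * (∑ j, m j / |x i - x j| ^ 3 * (x i - x j)) = m i * (μ * x i) := by
    rw [h]; ring
  exact mul_left_cancel₀ (hm i).ne' h3

/-- (Conley; Theorem 3.1 of Pacella.) For a collinear central
configuration of `n ≥ 3` bodies, the symmetric matrix `C` has real eigenvalues which,
ordered decreasingly, satisfy `λ_n = 0`, `λ_{n−1} = 1`, and `λ_i > 1` for `i ≤ n−2`. -/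
theorem collinear_cmat_spectrum
    {n : ℕ} (hn : 3 ≤ n) (m : Fin n → ℝ) (hm : ∀ i, 0 < m i)
    (μ : ℝ) (hμ : 0 < μ) (x : Fin n → ℝ) (hx : Function.Injective x)
    (hcc : ∀ i, (∑ j ∈ Finset.univ.erase i,
        m i * m j * (x i - x j) / |x i - x j| ^ 3) = μ * m i * x i) :
    ∃ (lam : Fin n → ℝ) (v : Fin n → Fin n → ℝ),
      (∀ k l, v k ⬝ᵥ v l = if k = l then 1 else 0) ∧
      (∀ k, (Matrix.of (cmat m μ x)).mulVec (v k) = lam k • v k) ∧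
      Antitone lam ∧
      lam ⟨n - 1, by omega⟩ = 0 ∧
      lam ⟨n - 2, by omega⟩ = 1 ∧
      (∀ i : Fin n, (i : ℕ) < n - 2 → 1 < lam i) := by
  classical
  have hxcc := hcc_to_A m hm μ x hcc
  have hherm := cmat_isHermitian m μ x
  have hsym : (Matrix.of (cmat m μ x))ᵀ = Matrix.of (cmat m μ x) := by
    ext i j
    have h := congrFun (congrFun hherm i) j
    simpa [Matrix.conjTranspose_apply] using h
  set es : Fin n → ℝ := hherm.eigenvalues with hes
  set w : Fin n → Fin n → ℝ := fun k => ⇑(hherm.eigenvectorBasis k) with hw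
  have heig : ∀ k, (Matrix.of (cmat m μ x)).mulVec (w k) = es k • w k :=
    fun k => hherm.mulVec_eigenvectorBasis k
  have horth : ∀ k l, w k ⬝ᵥ w l = if k = l then 1 else 0 := by
    intro k l
    have h := orthonormal_iff_ite.1 hherm.eigenvectorBasis.orthonormal k l
    rw [EuclideanSpace.inner_eq_star_dotProduct, dotProduct_comm] at h
    simpa [dotProduct, hw] using h
  have hwne : ∀ k, w k ≠ 0 := by
    intro k hk
    exact hherm.eigenvectorBasis.orthonormal.ne_zero k (by ext i; exact congrFun hk i)
  have hclass := fun k =>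
    classify m hm μ hμ x hx hxcc (w k) (es k) (hwne k) (heig k)
  have hmsum : 0 < ∑ i, m i :=
    Finset.sum_pos (fun i _ => hm i) ⟨⟨0, by omega⟩, Finset.mem_univ _⟩
  have hx0 : ∃ i, x i ≠ 0 := by
    by_contra hcon
    push_neg at hcon
    have h01 : (⟨0, by omega⟩ : Fin n) ≠ (⟨1, by omega⟩ : Fin n) := by
      intro hq
      have := congrArg Fin.val hq
      norm_num at this
    exact h01 (hx (by rw [hcon, hcon]))
  have hmxsum : 0 < ∑ i, m i * x i ^ 2 := by
    obtain ⟨i0, hi0⟩ := hx0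
    apply Finset.sum_pos' (fun i _ => mul_nonneg (hm i).le (sq_nonneg _))
    exact ⟨i0, Finset.mem_univ _,
      mul_pos (hm i0) (lt_of_le_of_ne (sq_nonneg _) (Ne.symm (pow_ne_zero 2 hi0)))⟩
  have hdot0 : ∀ (c c' : ℝ) (vk vl : Fin n → ℝ), (∀ i, vk i = c * Real.sqrt (m i)) →
      (∀ i, vl i = c' * Real.sqrt (m i)) → vk ⬝ᵥ vl = c * c' * ∑ i, m i := by
    intro c c' vk vl h1 h2
    show (∑ i, vk i * vl i) = c * c' * ∑ i, m i
    rw [Finset.mul_sum]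
    refine Finset.sum_congr rfl fun i _ => ?_
    rw [h1 i, h2 i, show c * Real.sqrt (m i) * (c' * Real.sqrt (m i))
      = c * c' * (Real.sqrt (m i) * Real.sqrt (m i)) from by ring,
      Real.mul_self_sqrt (hm i).le]
  have hdot1 : ∀ (c c' : ℝ) (vk vl : Fin n → ℝ),
      (∀ i, vk i = c * (Real.sqrt (m i) * x i)) →
      (∀ i, vl i = c' * (Real.sqrt (m i) * x i)) →
      vk ⬝ᵥ vl = c * c' * ∑ i, m i * x i ^ 2 := by
    intro c c' vk vl h1 h2
    show (∑ i, vk i * vl i) = c * c' * ∑ i, m i * x i ^ 2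
    rw [Finset.mul_sum]
    refine Finset.sum_congr rfl fun i _ => ?_
    rw [h1 i, h2 i, show c * (Real.sqrt (m i) * x i) * (c' * (Real.sqrt (m i) * x i))
      = c * c' * (Real.sqrt (m i) * Real.sqrt (m i) * (x i * x i)) from by ring,
      Real.mul_self_sqrt (hm i).le]
    ring
  -- uniqueness of eigenvalue 0 and eigenvalue 1
  have huniq0 : ∀ k l, es k = 0 → es l = 0 → k = l := by
    intro k l hk hl
    by_contra hkl
    rcases hclass k with ⟨_, c, hc0, hcv⟩ | h | ⟨h1, _⟩
    · rcases hclass l with ⟨_, c', hc0', hcv'⟩ | h | ⟨h1, _⟩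
      · have hd := horth k l
        rw [if_neg hkl, hdot0 c c' (w k) (w l) hcv hcv'] at hd
        exact (mul_ne_zero (mul_ne_zero hc0 hc0') hmsum.ne') hd
      · rw [hl] at h; linarith
      · rw [hl] at h1; norm_num at h1
    · rw [hk] at h; linarith
    · rw [hk] at h1; norm_num at h1
  have huniq1 : ∀ k l, es k = 1 → es l = 1 → k = l := by
    intro k l hk hl
    by_contra hkl
    rcases hclass k with ⟨h0, _⟩ | h | ⟨_, c, hc0, hcv⟩
    · rw [hk] at h0; norm_num at h0
    · rw [hk] at h; linarith
    · rcases hclass l with ⟨h0, _⟩ | h | ⟨_, c', hc0', hcv'⟩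
      · rw [hl] at h0; norm_num at h0
      · rw [hl] at h; linarith
      · have hd := horth k l
        rw [if_neg hkl, hdot1 c c' (w k) (w l) hcv hcv'] at hd
        exact (mul_ne_zero (mul_ne_zero hc0 hc0') hmxsum.ne') hd
  -- existence of eigenvalues 0 and 1
  have hy0ne : (fun i => Real.sqrt (m i)) ≠ (0 : Fin n → ℝ) := by
    intro hq
    have := congrFun hq ⟨0, by omega⟩
    simp only [Pi.zero_apply] at this
    exact (Real.sqrt_ne_zero'.2 (hm _)) this
  have hy1ne : (fun i => Real.sqrt (m i) * x i) ≠ (0 : Fin n → ℝ) := by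
    intro hq
    obtain ⟨i0, hi0⟩ := hx0
    have := congrFun hq i0
    simp only [Pi.zero_apply] at this
    exact (mul_ne_zero (Real.sqrt_ne_zero'.2 (hm _)) hi0) this
  have hex0 : ∃ k, es k = 0 :=
    exists_eig_eq _ hsym w horth es heig _ hy0ne 0 (cmat_eig_zero m hm μ hμ x hx)
  have hex1 : ∃ k, es k = 1 :=
    exists_eig_eq _ hsym w horth es heig _ hy1ne 1 (cmat_eig_one m hm μ hμ x hx hxcc)
  -- sort eigenvalues decreasingly
  set τ := Tuple.sort (fun k => -es k) with hτ
  set lam : Fin n → ℝ := fun k => es (τ k) with hlam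
  have hanti : Antitone lam := by
    intro i j hij
    have h := Tuple.monotone_sort (fun k => -es k) hij
    simp only [Function.comp_apply] at h
    simp only [hlam]
    linarith
  set v : Fin n → Fin n → ℝ := fun k => w (τ k) with hv
  have htri : ∀ k, lam k = 0 ∨ lam k = 1 ∨ 1 < lam k := by
    intro k
    rcases hclass (τ k) with ⟨h0, _⟩ | h | ⟨h1, _⟩
    · exact Or.inl h0
    · exact Or.inr (Or.inr h)
    · exact Or.inr (Or.inl h1)
  have hluniq0 : ∀ k l, lam k = 0 → lam l = 0 → k = l := by
    intro k l hk hl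
    exact τ.injective (huniq0 _ _ hk hl)
  have hluniq1 : ∀ k l, lam k = 1 → lam l = 1 → k = l := by
    intro k l hk hl
    exact τ.injective (huniq1 _ _ hk hl)
  have hlex0 : ∃ k, lam k = 0 := by
    obtain ⟨k, hk⟩ := hex0
    exact ⟨τ.symm k, by simp only [hlam, Equiv.apply_symm_apply]; exact hk⟩
  have hlex1 : ∃ k, lam k = 1 := by
    obtain ⟨k, hk⟩ := hex1
    exact ⟨τ.symm k, by simp only [hlam, Equiv.apply_symm_apply]; exact hk⟩
  have hN1 : lam ⟨n - 1, by omega⟩ = 0 := by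
    obtain ⟨k0, hk0⟩ := hlex0
    have hle : lam ⟨n - 1, by omega⟩ ≤ lam k0 := by
      apply hanti
      rw [Fin.le_def]
      have := k0.isLt
      simp only []
      omega
    rw [hk0] at hle
    rcases htri ⟨n - 1, by omega⟩ with h | h | h
    · exact h
    · linarith
    · linarith
  have hN2 : lam ⟨n - 2, by omega⟩ = 1 := by
    obtain ⟨k1, hk1⟩ := hlex1
    have hk1N : k1 ≠ ⟨n - 1, by omega⟩ := by
      intro hq
      rw [hq, hN1] at hk1
      norm_num at hk1
    have hk1v : (k1 : ℕ) ≤ n - 2 := by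
      have h1 := k1.isLt
      have h2 : (k1 : ℕ) ≠ n - 1 := fun hq => hk1N (Fin.ext hq)
      omega
    have hle : lam ⟨n - 2, by omega⟩ ≤ lam k1 := by
      apply hanti
      rw [Fin.le_def]
      simpa using hk1v
    rw [hk1] at hle
    rcases htri ⟨n - 2, by omega⟩ with h | h | h
    · exfalso
      have := hluniq0 _ _ h hN1
      have := congrArg Fin.val this
      simp only [] at this
      omega
    · exact h
    · linarith
  refine ⟨lam, v, ?_, ?_, hanti, hN1, hN2, ?_⟩
  · intro k l
    rw [show v k ⬝ᵥ v l = w (τ k) ⬝ᵥ w (τ l) from rfl, horth (τ k) (τ l)]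
    by_cases hkl : k = l
    · rw [if_pos (by rw [hkl]), if_pos hkl]
    · rw [if_neg (fun hq => hkl (τ.injective hq)), if_neg hkl]
  · intro k
    exact heig (τ k)
  · intro i hi
    have hle : lam i ≥ lam ⟨n - 2, by omega⟩ := by
      apply hanti
      rw [Fin.le_def]
      simp only []
      omega
    rw [hN2] at hle
    rcases htri i with h | h | h
    · linarith
    · exfalso
      have := hluniq1 _ _ h hN2
      have := congrArg Fin.val this
      simp only [] at this
      omega
    · exact h
end

section
/- Let s be a central configuration with parameter μ > 0 of the planar n-body problem, let c ≠ 0, and let ρ(ν) > 0 satisfy ρ'' = ρ − μρ²/c² + 2ρ'²/ρ on an interval, with ν(t) defined by ν̇ = c/ρ(ν)². Set r(t) = ρ(ν(t)) Â(ν(t)) s, f(ν) = c²/(μ ρ(ν)) and H̃(s) = μ⁻¹ M^{-1/2} ∇²V(s) M^{-1/2}. Then a curve R(t) = ρ(ν(t)) Â(ν(t)) M^{-1/2} X(ν(t)), with X a ℂ^{2n}-valued (or ℝ^{2n}-valued) twice differentiable function of ν, satisfies the variational equation M R̈ = −∇²V(r(t)) R if and only if X satisfies f(ν)(X'' + 2ĴX')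 = (I_{2n} − H̃(s)) X, where ' denotes d/dν. -/
open Matrix Finset

noncomputable def Av (θ : ℝ) (v : Fin 2 → ℝ) : Fin 2 → ℝ :=
  Real.cos θ • v + Real.sin θ • j2 v

lemma j2_apply0 (v : Fin 2 → ℝ) : j2 v 0 = -(v 1) := rfl
lemma j2_apply1 (v : Fin 2 → ℝ) : j2 v 1 = v 0 := rfl

lemma rotM_mulVec (θ : ℝ) (v : Fin 2 → ℝ) : (rotM θ).mulVec v = Av θ v := by
  funext k; fin_cases k <;>
    simp [rotM, Av, j2, Matrix.mulVec, dotProduct, Fin.sum_univ_two] <;> ring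

lemma j2_add (v w : Fin 2 → ℝ) : j2 (v + w) = j2 v + j2 w := by
  funext k; fin_cases k <;> simp [j2] <;> ring
lemma j2_j2 (v : Fin 2 → ℝ) : j2 (j2 v) = -v := by
  funext k; fin_cases k <;> simp [j2]

noncomputable def AvL (θ : ℝ) : (Fin 2 → ℝ) →ₗ[ℝ] (Fin 2 → ℝ) where
  toFun v := Av θ v
  map_add' v w := by simp [Av, j2_add]; module
  map_smul' a v := by simp [Av, j2_smul]; module

lemma Av_add (θ : ℝ) (v w : Fin 2 → ℝ) : Av θ (v + w) = Av θ v + Av θ w := (AvL θ).map_add v w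
lemma Av_smul (θ : ℝ) (a : ℝ) (v : Fin 2 → ℝ) : Av θ (a • v) = a • Av θ v := (AvL θ).map_smul a v
lemma Av_sub (θ : ℝ) (v w : Fin 2 → ℝ) : Av θ (v - w) = Av θ v - Av θ w := (AvL θ).map_sub v w
lemma Av_sum (θ : ℝ) {α : Type*} (t : Finset α) (f : α → Fin 2 → ℝ) :
    Av θ (∑ j ∈ t, f j) = ∑ j ∈ t, Av θ (f j) := map_sum (AvL θ) f t

lemma Av_Av_neg (θ : ℝ) (v : Fin 2 → ℝ) : Av (-θ) (Av θ v) = v := by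
  funext k; fin_cases k
  · simp [Av, j2, Matrix.vecHead, Matrix.vecTail]; ring_nf
    linear_combination (v 0) * Real.sin_sq_add_cos_sq θ
  · simp [Av, j2, Matrix.vecHead, Matrix.vecTail]; ring_nf
    linear_combination (v 1) * Real.sin_sq_add_cos_sq θ

lemma Av_inj {θ : ℝ} {v w : Fin 2 → ℝ} (h : Av θ v = Av θ w) : v = w := by
  have := congrArg (Av (-θ)) h
  rwa [Av_Av_neg, Av_Av_neg] at this

lemma dot_Av (θ : ℝ) (u v : Fin 2 → ℝ) :
    Av θ u 0 * Av θ v 0 + Av θ u 1 * Av θ v 1 = u 0 * v 0 + u 1 * v 1 := by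
  simp [Av, j2, Matrix.vecHead, Matrix.vecTail]; ring_nf
  linear_combination (u 0 * v 0 + u 1 * v 1) * Real.sin_sq_add_cos_sq θ

lemma sq_Av (θ : ℝ) (u : Fin 2 → ℝ) :
    Av θ u 0 ^ 2 + Av θ u 1 ^ 2 = u 0 ^ 2 + u 1 ^ 2 := by
  have := dot_Av θ u u; nlinarith [this]

lemma norm2_Av (θ : ℝ) (u : Fin 2 → ℝ) : norm2 (Av θ u) = norm2 u := by
  unfold norm2; rw [sq_Av]

lemma norm2_smul_s13 (a : ℝ) (ha : 0 ≤ a) (u : Fin 2 → ℝ) : norm2 (a • u) = a * norm2 u := by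
  unfold norm2
  have : (a • u) 0 ^ 2 + (a • u) 1 ^ 2 = a ^ 2 * (u 0 ^ 2 + u 1 ^ 2) := by
    simp [Pi.smul_apply, smul_eq_mul]; ring
  rw [this, Real.sqrt_mul (sq_nonneg a), Real.sqrt_sq ha]


lemma norm2_ne_zero {v : Fin 2 → ℝ} (hv : v ≠ 0) : norm2 v ≠ 0 := by
  intro h
  apply hv
  have h2 : v 0 ^ 2 + v 1 ^ 2 ≤ 0 := by
    by_contra hlt; push_neg at hlt
    have := Real.sqrt_pos.mpr hlt
    rw [norm2] at h; linarith
  have h0 : v 0 = 0 := by nlinarith [sq_nonneg (v 0), sq_nonneg (v 1)]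
  have h1 : v 1 = 0 := by nlinarith [sq_nonneg (v 0), sq_nonneg (v 1)]
  funext k; fin_cases k <;> simpa

lemma vecMulVec_mulVec' (u w : Fin 2 → ℝ) :
    (vecMulVec u u).mulVec w = (u 0 * w 0 + u 1 * w 1) • u := by
  funext k; simp [vecMulVec, Matrix.mulVec, dotProduct, Fin.sum_univ_two]; ring

lemma sum_mulVec' {α : Type*} (t : Finset α) (f : α → Matrix (Fin 2) (Fin 2) ℝ)
    (v : Fin 2 → ℝ) : (∑ j ∈ t, f j).mulVec v = ∑ j ∈ t, (f j).mulVec v := by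
  funext k
  fin_cases k <;> simp [Matrix.mulVec, dotProduct, Matrix.sum_apply, Finset.sum_mul,
    Finset.sum_add_distrib]

lemma hblockOff_scale {n : ℕ} (m : Fin n → ℝ) (s : Fin n → Fin 2 → ℝ)
    (θ ρ0 : ℝ) (hρ : 0 < ρ0) (i j : Fin n) (hq : norm2 (s i - s j) ≠ 0)
    (v : Fin 2 → ℝ) :
    (hblockOff m (fun k => ρ0 • Av θ (s k)) i j).mulVec (Av θ v)
      = (ρ0 ^ 3)⁻¹ • Av θ ((hblockOff m s i j).mulVec v) := by
  have hd : (fun k => ρ0 • Av θ (s k)) i - (fun k => ρ0 • Av θ (s k)) j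
      = ρ0 • Av θ (s i - s j) := by
    simp [Av_sub, smul_sub]
  have hn : norm2 (ρ0 • Av θ (s i - s j)) = ρ0 * norm2 (s i - s j) := by
    rw [norm2_smul_s13 _ hρ.le, norm2_Av]
  set e := s i - s j with he
  set q := norm2 e with hqdef
  unfold hblockOff
  rw [hd, hn]
  rw [smul_mulVec, Matrix.sub_mulVec, Matrix.one_mulVec, smul_mulVec,
    vecMulVec_mulVec', smul_mulVec, Matrix.sub_mulVec, Matrix.one_mulVec,
    smul_mulVec, vecMulVec_mulVec']
  have hdot : (ρ0 • Av θ e) 0 * Av θ v 0 + (ρ0 • Av θ e) 1 * Av θ v 1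
      = ρ0 * (e 0 * v 0 + e 1 * v 1) := by
    simp only [Pi.smul_apply, smul_eq_mul]
    rw [show ρ0 * Av θ e 0 * Av θ v 0 + ρ0 * Av θ e 1 * Av θ v 1
      = ρ0 * (Av θ e 0 * Av θ v 0 + Av θ e 1 * Av θ v 1) by ring, dot_Av]
  rw [hdot]
  have hρ' : ρ0 ≠ 0 := hρ.ne'
  have hq' : norm2 (s i - s j) ≠ 0 := hq
  simp only [Av_sub, Av_smul, ← he, ← hqdef, mul_pow]
  match_scalars <;> field_simp <;> ring

lemma Av_neg' (θ : ℝ) (v : Fin 2 → ℝ) : Av θ (-v) = -Av θ v := map_neg (AvL θ) v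

lemma hblock_scale {n : ℕ} (m : Fin n → ℝ) (s : Fin n → Fin 2 → ℝ)
    (hsep : ∀ i j, i ≠ j → s i ≠ s j) (θ ρ0 : ℝ) (hρ : 0 < ρ0) (i j : Fin n)
    (v : Fin 2 → ℝ) :
    (hblock m (fun k => ρ0 • Av θ (s k)) i j).mulVec (Av θ v)
      = (ρ0 ^ 3)⁻¹ • Av θ ((hblock m s i j).mulVec v) := by
  have key : ∀ k : Fin n, i ≠ k →
      (hblockOff m (fun k => ρ0 • Av θ (s k)) i k).mulVec (Av θ v)
        = (ρ0 ^ 3)⁻¹ • Av θ ((hblockOff m s i k).mulVec v) := fun k hk =>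
    hblockOff_scale m s θ ρ0 hρ i k
      (norm2_ne_zero (sub_ne_zero_of_ne (hsep i k hk))) v
  unfold hblock
  by_cases h : i = j
  · rw [if_pos h, if_pos h]
    rw [Matrix.neg_mulVec, sum_mulVec', Matrix.neg_mulVec, sum_mulVec',
      Av_neg', Av_sum, smul_neg, Finset.smul_sum]
    congr 1
    exact Finset.sum_congr rfl fun k hk =>
      key k (fun he => (Finset.mem_erase.mp hk).1 he.symm)
  · rw [if_neg h, if_neg h]
    exact key j h

lemma hasDerivAt_comp_j2 {w : ℝ → Fin 2 → ℝ} {w' : Fin 2 → ℝ} {z : ℝ}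
    (hw : HasDerivAt w w' z) : HasDerivAt (fun z => j2 (w z)) (j2 w') z := by
  rw [hasDerivAt_pi] at hw ⊢
  intro k; fin_cases k
  · simpa [j2] using (hw 1).fun_neg
  · simpa [j2] using hw 0

lemma hasDerivAt_Av' {w : ℝ → Fin 2 → ℝ} {w' : Fin 2 → ℝ} {z : ℝ}
    (hw : HasDerivAt w w' z) :
    HasDerivAt (fun z => Av z (w z)) (Av z (j2 (w z)) + Av z w') z := by
  have h1 : HasDerivAt (fun z => Real.cos z • w z)
      (Real.cos z • w' + (-Real.sin z) • w z) z :=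
    (Real.hasDerivAt_cos z).smul hw
  have h2 : HasDerivAt (fun z => Real.sin z • j2 (w z))
      (Real.sin z • j2 w' + Real.cos z • j2 (w z)) z :=
    (Real.hasDerivAt_sin z).smul (hasDerivAt_comp_j2 hw)
  have h := h1.fun_add h2
  refine h.congr_deriv ?_
  simp only [Av, j2_j2, j2_add, j2_smul]
  module

lemma dd_formula
    (μ c : ℝ) (hc : c ≠ 0) (a b : ℝ) (J : Set ℝ) (hJ : IsOpen J)
    (ρ : ℝ → ℝ) (hρpos : ∀ z ∈ J, 0 < ρ z)
    (hρd : ∀ z ∈ J, DifferentiableAt ℝ ρ z ∧ DifferentiableAt ℝ (deriv ρ) z)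
    (hρode : ∀ z ∈ J,
      deriv (deriv ρ) z = ρ z - μ * ρ z ^ 2 / c ^ 2 + 2 * (deriv ρ z) ^ 2 / ρ z)
    (ν : ℝ → ℝ) (a' b' : ℝ) (hmap : ∀ t ∈ Set.Ioo a' b', ν t ∈ J)
    (hν : ∀ t ∈ Set.Ioo a' b', HasDerivAt ν (c / ρ (ν t) ^ 2) t)
    (Y Y' Y'' : ℝ → Fin 2 → ℝ)
    (hY : ∀ z ∈ J, HasDerivAt Y (Y' z) z)
    (hY' : ∀ z ∈ J, HasDerivAt Y' (Y'' z) z)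
    (d : ℝ) (hd : d ≠ 0)
    (t : ℝ) (ht : t ∈ Set.Ioo a' b') :
    deriv (deriv (fun τ => (ρ (ν τ) / d) • Av (ν τ) (Y (ν τ)))) t
      = (1 / d) • Av (ν t)
          ((c ^ 2 / ρ (ν t) ^ 3) • (Y'' (ν t) + (2 : ℝ) • j2 (Y' (ν t)))
            - (μ / ρ (ν t) ^ 2) • Y (ν t)) := by
  set F₁ : ℝ → Fin 2 → ℝ := fun z =>
    (ρ z / d) • (Av z (j2 (Y z)) + Av z (Y' z)) + (deriv ρ z / d) • Av z (Y z)
    with hF₁def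
  have hF : ∀ z ∈ J, HasDerivAt (fun z => (ρ z / d) • Av z (Y z)) (F₁ z) z := by
    intro z hz
    exact ((hρd z hz).1.hasDerivAt.div_const d).smul (hasDerivAt_Av' (hY z hz))
  set F₂ : ℝ → Fin 2 → ℝ := fun z =>
    ((ρ z / d) • ((Av z (j2 (j2 (Y z))) + Av z (j2 (Y' z)))
        + (Av z (j2 (Y' z)) + Av z (Y'' z)))
      + (deriv ρ z / d) • (Av z (j2 (Y z)) + Av z (Y' z)))
    + ((deriv ρ z / d) • (Av z (j2 (Y z)) + Av z (Y' z))
      + (deriv (deriv ρ) z / d) • Av z (Y z))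
    with hF₂def
  have hF₁ : ∀ z ∈ J, HasDerivAt F₁ (F₂ z) z := by
    intro z hz
    exact (((hρd z hz).1.hasDerivAt.div_const d).smul
        ((hasDerivAt_Av' (hasDerivAt_comp_j2 (hY z hz))).add
          (hasDerivAt_Av' (hY' z hz)))).add
      (((hρd z hz).2.hasDerivAt.div_const d).smul (hasDerivAt_Av' (hY z hz)))
  have hg : ∀ τ ∈ Set.Ioo a' b',
      HasDerivAt (fun τ => (ρ (ν τ) / d) • Av (ν τ) (Y (ν τ)))
        ((c / ρ (ν τ) ^ 2) • F₁ (ν τ)) τ :=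
    fun τ hτ => (hF (ν τ) (hmap τ hτ)).scomp τ (hν τ hτ)
  have hder1 : deriv (deriv (fun τ => (ρ (ν τ) / d) • Av (ν τ) (Y (ν τ)))) t
      = deriv (fun τ => (c / ρ (ν τ) ^ 2) • F₁ (ν τ)) t := by
    apply Filter.EventuallyEq.deriv_eq
    filter_upwards [isOpen_Ioo.mem_nhds ht] with τ hτ
    exact (hg τ hτ).deriv
  rw [hder1]
  have hθ : ν t ∈ J := hmap t ht
  have hρne : ρ (ν t) ≠ 0 := (hρpos _ hθ).ne'
  have h2ne : ρ (ν t) ^ 2 ≠ 0 := pow_ne_zero 2 hρne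
  have hcρ := (hasDerivAt_const (ν t) c).div ((hρd _ hθ).1.hasDerivAt.pow 2) h2ne
  have hbig' : HasDerivAt (fun τ => (c / ρ (ν τ) ^ 2) • F₁ (ν τ))
      ((c / ρ (ν t) ^ 2) • ((c / ρ (ν t) ^ 2) • F₂ (ν t) +
        ((0 * ρ (ν t) ^ 2 - c * (((2 : ℕ) : ℝ) * ρ (ν t) ^ (2 - 1) * deriv ρ (ν t)))
          / (ρ (ν t) ^ 2) ^ 2) • F₁ (ν t))) t :=
    (hcρ.smul (hF₁ _ hθ)).scomp t (hν t ht)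
  rw [hbig'.deriv]
  rw [hF₁def, hF₂def]
  simp only [j2_j2, Av_neg']
  rw [show deriv (deriv ρ) (ν t) = ρ (ν t) - μ * ρ (ν t) ^ 2 / c ^ 2
      + 2 * (deriv ρ (ν t)) ^ 2 / ρ (ν t) from hρode _ hθ]
  simp only [Av_sub, Av_add, Av_smul]
  match_scalars <;> field_simp <;> ring

lemma Av_inj_iff {θ : ℝ} {v w : Fin 2 → ℝ} : Av θ v = Av θ w ↔ v = w :=
  ⟨Av_inj, fun h => by rw [h]⟩

/-- Along the Keplerian homographic solution `r(t) = ρ(ν(t))Â(ν(t))s`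
associated with a central configuration `s`, a curve
`R(t) = ρ(ν(t))Â(ν(t))M^{-1/2}X(ν(t))` satisfies the variational equation
`M R̈ = −∇²V(r(t))R` if and only if `X` satisfies
`f(ν)(X'' + 2ĴX') = (I − H̃(s))X`, where `f(ν) = c²/(μρ(ν))` and
`H̃(s) = μ⁻¹M^{-1/2}∇²V(s)M^{-1/2}`, the prime denoting `d/dν`. -/
theorem variational_equation_true_anomaly_form
    {n : ℕ} (hn : 2 ≤ n) (m : Fin n → ℝ) (hm : ∀ i, 0 < m i)
    (s : Fin n → Fin 2 → ℝ) (hsep : ∀ i j, i ≠ j → s i ≠ s j)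
    (μ : ℝ) (hμ : 0 < μ) (hcc : ∀ i, gradV m s i = (μ * m i) • s i)
    (c : ℝ) (hc : c ≠ 0)
    (a b : ℝ) (J : Set ℝ) (hJ : IsOpen J)
    (ρ : ℝ → ℝ)
    (hρpos : ∀ z ∈ J, 0 < ρ z)
    (hρd : ∀ z ∈ J, DifferentiableAt ℝ ρ z ∧ DifferentiableAt ℝ (deriv ρ) z)
    (hρode : ∀ z ∈ J,
      deriv (deriv ρ) z = ρ z - μ * ρ z ^ 2 / c ^ 2 + 2 * (deriv ρ z) ^ 2 / ρ z)
    (ν : ℝ → ℝ) (hmap : ∀ t ∈ Set.Ioo a b, ν t ∈ J)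
    (hν : ∀ t ∈ Set.Ioo a b, HasDerivAt ν (c / ρ (ν t) ^ 2) t)
    (X : ℝ → Fin n → Fin 2 → ℝ)
    (hX : ∀ z ∈ J, DifferentiableAt ℝ X z ∧ DifferentiableAt ℝ (deriv X) z) :
    (∀ t ∈ Set.Ioo a b, ∀ i,
      m i • deriv (deriv
          (fun τ => (ρ (ν τ) / Real.sqrt (m i)) • (rotM (ν τ)).mulVec (X (ν τ) i))) t
        = -∑ j, (hblock m (fun k => ρ (ν t) • (rotM (ν t)).mulVec (s k)) i j).mulVec
            ((ρ (ν t) / Real.sqrt (m j)) • (rotM (ν t)).mulVec (X (ν t) j)))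
      ↔
    (∀ t ∈ Set.Ioo a b, ∀ i,
      (c ^ 2 / (μ * ρ (ν t))) •
          (deriv (deriv X) (ν t) i + (2 : ℝ) • j2 (deriv X (ν t) i))
        = X (ν t) i - ∑ j,
            ((1 / (μ * Real.sqrt (m i * m j))) • hblock m s i j).mulVec (X (ν t) j)) := by
  refine forall_congr' fun t => forall_congr' fun ht => forall_congr' fun i => ?_
  have hθ : ν t ∈ J := hmap t ht
  have hρθ : 0 < ρ (ν t) := hρpos _ hθ
  have hρne : ρ (ν t) ≠ 0 := hρθ.ne'
  have h2ne : ρ (ν t) ^ 2 ≠ 0 := pow_ne_zero 2 hρne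
  have hsm : ∀ j, Real.sqrt (m j) ≠ 0 := fun j => (Real.sqrt_pos.mpr (hm j)).ne'
  -- second-derivative formula
  have hdd : deriv (deriv
        (fun τ => (ρ (ν τ) / Real.sqrt (m i)) • Av (ν τ) (X (ν τ) i))) t
      = (1 / Real.sqrt (m i)) • Av (ν t)
          ((c ^ 2 / ρ (ν t) ^ 3) •
              (deriv (deriv X) (ν t) i + (2 : ℝ) • j2 (deriv X (ν t) i))
            - (μ / ρ (ν t) ^ 2) • X (ν t) i) :=
    dd_formula μ c hc a b J hJ ρ hρpos hρd hρode ν a b hmap hν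
      (fun z => X z i) (fun z => deriv X z i) (fun z => deriv (deriv X) z i)
      (fun z hz => hasDerivAt_pi.mp (hX z hz).1.hasDerivAt i)
      (fun z hz => hasDerivAt_pi.mp (hX z hz).2.hasDerivAt i)
      (Real.sqrt (m i)) (hsm i) t ht
  simp only [rotM_mulVec, Matrix.mulVec_smul, Matrix.smul_mulVec]
  rw [hdd]
  simp only [hblock_scale m s hsep (ν t) (ρ (ν t)) hρθ]
  simp only [← Av_smul, ← Av_sum, ← Av_neg']
  rw [Av_inj_iff]
  set w : Fin n → Fin 2 → ℝ := fun j => (hblock m s i j).mulVec (X (ν t) j) with hw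
  set k : ℝ := μ * Real.sqrt (m i) / ρ (ν t) ^ 2 with hkdef
  have hk : k ≠ 0 := div_ne_zero (mul_ne_zero hμ.ne' (hsm i)) h2ne
  have hA : m i • (1 / Real.sqrt (m i)) •
        ((c ^ 2 / ρ (ν t) ^ 3) •
            (deriv (deriv X) (ν t) i + (2 : ℝ) • j2 (deriv X (ν t) i))
          - (μ / ρ (ν t) ^ 2) • X (ν t) i)
      = k • ((c ^ 2 / (μ * ρ (ν t))) •
            (deriv (deriv X) (ν t) i + (2 : ℝ) • j2 (deriv X (ν t) i)))
        - k • X (ν t) i := by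
    set u : ℝ := Real.sqrt (m i) with hu
    have hune : u ≠ 0 := hsm i
    have hsq : u * u = m i := Real.mul_self_sqrt (hm i).le
    rw [hkdef, ← hsq]
    match_scalars <;> field_simp <;> ring
  have hB : -∑ j, ((ρ (ν t) / Real.sqrt (m j)) • (ρ (ν t) ^ 3)⁻¹ • w j)
      = k • (X (ν t) i - ∑ j, (1 / (μ * Real.sqrt (m i * m j))) • w j)
        - k • X (ν t) i := by
    rw [smul_sub, sub_sub_cancel_left, Finset.smul_sum]
    congr 1
    refine Finset.sum_congr rfl fun j _ => ?_
    rw [smul_smul, smul_smul, hkdef, Real.sqrt_mul (hm i).le]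
    congr 1
    have h1 := hsm i
    have h2 := hsm j
    have h3 := hμ.ne'
    field_simp
  rw [hA, hB, sub_left_inj]
  exact smul_right_inj hk
end
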